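/- arXiv:1812.02721 — 7 statements merged into one kernel-verified Lean document; each statement's English description precedes it below -/
import Mathlib

section
/- Let p be a prime, h ∈ 𝔽_p[x] with h(1) ≠ 0, and let (V_m)_{m≥0} be a family of polynomials in 𝔽_p[v]. Suppose that for every ℓ ≥ 0 there exists N₀ such that for all N ≥ N₀ the family (V_m) generates an optimal basis for t_h at locality ℓ at size L = p^N. Then V_0 is a nonzero constant polynomial, and V_m divides V_{m′} in 𝔽_p[v] whenever 0 ≤ m ≤ m′. -/
open Polynomial

noncomputable section

/-- The ring `R = 𝔽_p[u,v]/(u^L − 1, v^L − 1)`, modelled as the group algebra of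
`ℤ/L × ℤ/L` over `𝔽_p`; the exponent pair of a monomial `u^i v^j` is `(i, j)`. -/
abbrev R (p L : ℕ) : Type := AddMonoidAlgebra (ZMod p) (ZMod L × ZMod L)

/-- The image of `u` in `R`. -/
def uu (p L : ℕ) : R p L := AddMonoidAlgebra.single ((1 : ZMod L), (0 : ZMod L)) 1

/-- The image of `v` in `R`. -/
def vv (p L : ℕ) : R p L := AddMonoidAlgebra.single ((0 : ZMod L), (1 : ZMod L)) 1

/-- `u` as a unit of `R`. -/
def uUnit (p L : ℕ) : (R p L)ˣ where
  val := AddMonoidAlgebra.single ((1 : ZMod L), (0 : ZMod L)) 1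
  inv := AddMonoidAlgebra.single ((-1 : ZMod L), (0 : ZMod L)) 1
  val_inv := by
    rw [AddMonoidAlgebra.single_mul_single]
    simp [AddMonoidAlgebra.one_def]
    rfl
  inv_val := by
    rw [AddMonoidAlgebra.single_mul_single]
    simp [AddMonoidAlgebra.one_def]
    rfl

/-- `v` as a unit of `R`. -/
def vUnit (p L : ℕ) : (R p L)ˣ where
  val := AddMonoidAlgebra.single ((0 : ZMod L), (1 : ZMod L)) 1
  inv := AddMonoidAlgebra.single ((0 : ZMod L), (-1 : ZMod L)) 1
  val_inv := by
    rw [AddMonoidAlgebra.single_mul_single]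
    simp [AddMonoidAlgebra.one_def]
    rfl
  inv_val := by
    rw [AddMonoidAlgebra.single_mul_single]
    simp [AddMonoidAlgebra.one_def]
    rfl

/-- `deg_v W`: the `v`-degree of the canonical representative of `W`
(each exponent of `v` is represented by its value in `{0, …, L−1}`). -/
def degV {p L : ℕ} (W : R p L) : ℕ := W.coeff.support.sup fun a => a.2.val

/-- The evolution operator `t_h`: multiplication by `h(v)⁻¹ · h(uv)`
(`Ring.inverse` is the genuine inverse whenever `h(v)` is a unit, in particular when
`h(1) ≠ 0`). -/
def th {p L : ℕ} (h : (ZMod p)[X]) (W : R p L) : R p L :=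
  Ring.inverse (aeval (vv p L) h) * aeval (uu p L * vv p L) h * W

/-- `W` is consistently `ℓ`-local under `t_h`: `t_h^n W` is `ℓ`-local for all `n ≥ 0`. -/
def ConsLocal {p L : ℕ} (h : (ZMod p)[X]) (ℓ : ℕ) (W : R p L) : Prop :=
  ∀ n : ℕ, degV ((th h)^[n] W) ≤ ℓ

/-- `U_m(u) = (u − 1)^(L − 1 − m)`. -/
def Um (p L : ℕ) (m : ℕ) : R p L := (uu p L - 1) ^ (L - 1 - m)

/-- `g` is the (unique) expansion of `W` as `W = Σ_{m<L} U_m(u) · g_m(v)`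
with `deg g_m < L` for all `m < L`. -/
def IsExpansion (p L : ℕ) (W : R p L) (g : ℕ → (ZMod p)[X]) : Prop :=
  (∀ m < L, (g m).degree < (L : WithBot ℕ)) ∧
    W = ∑ m ∈ Finset.range L, Um p L m * aeval (vv p L) (g m)

/-- `(V_m)` generates an optimal basis for `t_h` at locality `ℓ` at size `L`:
for every `ℓ`-local `W ∈ R`, `W` is consistently `ℓ`-local under `t_h` iff
`V_m ∣ W_m` (in `𝔽_p[v]`) for all `m < L`, where `(W_m)` is the expansion of `W`
in the basis `(U_m)`. -/
def GenOptBasis (p L : ℕ) (h : (ZMod p)[X]) (V : ℕ → (ZMod p)[X]) (ℓ : ℕ) : Prop :=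
  ∀ W : R p L, degV W ≤ ℓ →
    (ConsLocal h ℓ W ↔ ∀ g : ℕ → (ZMod p)[X], IsExpansion p L W g → ∀ m < L, V m ∣ g m)

section Aux

open AddMonoidAlgebra Finset

variable {p L : ℕ}

theorem uu_pow (p L : ℕ) (n : ℕ) :
    uu p L ^ n = AddMonoidAlgebra.single ((n : ZMod L), (0 : ZMod L)) 1 := by
  rw [uu, AddMonoidAlgebra.single_pow, one_pow]
  congr 1
  simp [Prod.ext_iff, nsmul_eq_mul]

theorem vv_pow (p L : ℕ) (n : ℕ) :
    vv p L ^ n = AddMonoidAlgebra.single ((0 : ZMod L), (n : ZMod L)) 1 := by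
  rw [vv, AddMonoidAlgebra.single_pow, one_pow]
  congr 1
  simp [Prod.ext_iff, nsmul_eq_mul]

theorem uu_pow_L (p L : ℕ) : uu p L ^ L = 1 := by
  rw [uu_pow, ZMod.natCast_self, AddMonoidAlgebra.one_def]
  rfl

theorem vv_pow_L (p L : ℕ) : vv p L ^ L = 1 := by
  rw [vv_pow, ZMod.natCast_self, AddMonoidAlgebra.one_def]
  rfl

theorem X_sub_one_pow_L (hp : p.Prime) {N : ℕ} (hL : L = p ^ N) :
    ((X : (ZMod p)[X]) - 1) ^ L = X ^ L - 1 := by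
  haveI := Fact.mk hp
  subst hL
  simpa using sub_pow_expChar_pow (R := (ZMod p)[X]) X 1 N

theorem usub_pow_L (hp : p.Prime) {N : ℕ} (hL : L = p ^ N) : (uu p L - 1) ^ L = 0 := by
  have h1 : (uu p L - 1) ^ L = aeval (uu p L) (((X : (ZMod p)[X]) - 1) ^ L) := by
    simp
  rw [h1, X_sub_one_pow_L hp hL, map_sub, map_pow, aeval_X, map_one, uu_pow_L, sub_self]

theorem X_sub_one_pow_pred (hp : p.Prime) {N : ℕ} (hL : L = p ^ N) :
    ((X : (ZMod p)[X]) - 1) ^ (L - 1) = ∑ i ∈ range L, (X : (ZMod p)[X]) ^ i := by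
  haveI := Fact.mk hp
  have hL1 : 1 ≤ L := by
    subst hL; exact Nat.one_le_pow _ _ hp.pos
  have hX : ((X : (ZMod p)[X]) - 1) ≠ 0 := by
    have := Polynomial.X_sub_C_ne_zero (R := ZMod p) 1
    simpa using this
  apply mul_left_cancel₀ hX
  have hsucc : (L - 1) + 1 = L := by omega
  rw [← pow_succ', hsucc, X_sub_one_pow_L hp hL, mul_comm, geom_sum_mul]

theorem usub_pow_pred (hp : p.Prime) {N : ℕ} (hL : L = p ^ N) :
    (uu p L - 1) ^ (L - 1) = ∑ i ∈ range L, uu p L ^ i := by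
  have h1 : (uu p L - 1) ^ (L - 1) = aeval (uu p L) (((X : (ZMod p)[X]) - 1) ^ (L - 1)) := by
    simp
  rw [h1, X_sub_one_pow_pred hp hL, map_sum]
  simp

end Aux

section Aux2

open AddMonoidAlgebra Finset

variable {p L : ℕ}

theorem aeval_vv_eq_sum (q : (ZMod p)[X]) {n : ℕ} (hn : q.natDegree < n) :
    aeval (vv p L) q
      = ∑ j ∈ range n, AddMonoidAlgebra.single ((0 : ZMod L), (j : ZMod L)) (q.coeff j) := by
  rw [aeval_eq_sum_range' hn]
  refine Finset.sum_congr rfl fun j _ => ?_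
  rw [vv_pow, AddMonoidAlgebra.smul_single', mul_one]

theorem key_inj (hp : p.Prime) (hL0 : 0 < L) (q : (ZMod p)[X])
    (hq : q.degree < (L : WithBot ℕ))
    (h0 : (∑ i ∈ range L, uu p L ^ i) * aeval (vv p L) q = 0) : q = 0 := by
  by_cases hq0 : q = 0
  · exact hq0
  have hqd : q.natDegree < L := by
    rwa [Polynomial.natDegree_lt_iff_degree_lt hq0]
  have hsum : (∑ i ∈ range L, ∑ j ∈ range L,
      AddMonoidAlgebra.single ((i : ZMod L), (j : ZMod L)) (q.coeff j)) = (0 : R p L) := by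
    rw [← h0, aeval_vv_eq_sum q hqd, Finset.sum_mul_sum]
    refine Finset.sum_congr rfl fun i _ => Finset.sum_congr rfl fun j _ => ?_
    rw [uu_pow, AddMonoidAlgebra.single_mul_single, one_mul]
    congr 1
    simp [Prod.ext_iff]
  have hcoeff : ∀ j₀ < L, q.coeff j₀ = 0 := by
    intro j₀ hj₀
    classical
    have h2 := congrArg (fun x : R p L => Finsupp.applyAddHom (M := ZMod p) ((0 : ZMod L), (j₀ : ZMod L)) x.coeff) hsum
    simp only [AddMonoidAlgebra.coeff_sum, AddMonoidAlgebra.coeff_single, AddMonoidAlgebra.coeff_zero, map_sum, map_zero, Finsupp.applyAddHom_apply, Finsupp.single_apply] at h2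
    rw [Finset.sum_eq_single_of_mem 0 (Finset.mem_range.mpr hL0)] at h2
    · rw [Finset.sum_eq_single_of_mem j₀ (Finset.mem_range.mpr hj₀)] at h2
      · rwa [if_pos (by norm_num)] at h2
      · intro j hj hne
        rw [if_neg]
        intro hpair
        apply hne
        have := congrArg Prod.snd hpair
        simp only at this
        rw [← ZMod.val_cast_of_lt (Finset.mem_range.mp hj), this,
          ZMod.val_cast_of_lt hj₀]
    · intro i hi hne
      refine Finset.sum_eq_zero fun j _ => ?_
      rw [if_neg]
      intro hpair
      apply hne
      have := congrArg Prod.fst hpair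
      simp only at this
      rw [← ZMod.val_cast_of_lt (Finset.mem_range.mp hi), this]
      simp
  refine Polynomial.ext fun j => ?_
  rcases lt_or_ge j L with hj | hj
  · simpa using hcoeff j hj
  · rw [Polynomial.coeff_eq_zero_of_degree_lt, Polynomial.coeff_zero]
    refine lt_of_lt_of_le hq ?_
    exact_mod_cast Nat.cast_le.mpr hj

theorem key_inj' (hp : p.Prime) {N : ℕ} (hL : L = p ^ N) (q : (ZMod p)[X])
    (hq : q.degree < (L : WithBot ℕ))
    (h0 : (uu p L - 1) ^ (L - 1) * aeval (vv p L) q = 0) : q = 0 := by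
  have hL0 : 0 < L := by subst hL; exact Nat.pow_pos hp.pos
  exact key_inj hp hL0 q hq (by rwa [← usub_pow_pred hp hL])

end Aux2

section Aux3

open AddMonoidAlgebra Finset

variable {p L : ℕ}

theorem degV_mul_le {A W : R p L} (hA : ∀ a ∈ A.coeff.support, a.2 = (0 : ZMod L)) :
    degV (A * W) ≤ degV W := by
  classical
  refine Finset.sup_le fun x hx => ?_
  have hx' := AddMonoidAlgebra.support_coeff_mul_subset A W hx
  rw [Finset.mem_add] at hx'
  obtain ⟨a, ha, b, hb, rfl⟩ := hx'
  have h2 : (a + b).2 = b.2 := by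
    have := hA a ha
    simp [Prod.snd_add, this]
  rw [h2]
  exact Finset.le_sup (f := fun a : ZMod L × ZMod L => a.2.val) hb

theorem support_usub_pow (k : ℕ) :
    ∀ a ∈ ((uu p L - 1) ^ k).coeff.support, a.2 = (0 : ZMod L) := by
  classical
  induction k with
  | zero =>
    intro a ha
    rw [pow_zero, AddMonoidAlgebra.one_def] at ha
    have := Finsupp.support_single_subset ha
    simp only [Finset.mem_singleton] at this
    simp [this]
  | succ k ih =>
    intro a ha
    rw [pow_succ] at ha
    have hx' := AddMonoidAlgebra.support_coeff_mul_subset _ _ ha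
    rw [Finset.mem_add] at hx'
    obtain ⟨b, hb, c, hc, rfl⟩ := hx'
    have hc2 : c.2 = 0 := by
      have he : (uu p L - 1).coeff = (Finsupp.single ((1 : ZMod L), (0 : ZMod L)) 1
          - Finsupp.single ((0 : ZMod L), (0 : ZMod L)) 1 : (ZMod L × ZMod L) →₀ ZMod p) := by
        rw [AddMonoidAlgebra.one_def]; rfl
      rw [he] at hc
      have hsub := Finsupp.support_sub hc
      rw [Finset.mem_union] at hsub
      rcases hsub with h | h
      · have := Finsupp.support_single_subset h
        simp only [Finset.mem_singleton] at this
        rw [this]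
      · have := Finsupp.support_single_subset h
        simp only [Finset.mem_singleton] at this
        rw [this]
    simp [Prod.snd_add, ih b hb, hc2]

theorem degV_aeval_vv [NeZero L] (q : (ZMod p)[X]) :
    degV (aeval (vv p L) q) ≤ q.natDegree := by
  classical
  rw [aeval_vv_eq_sum q (Nat.lt_succ_self _)]
  refine Finset.sup_le fun x hx => ?_
  rw [AddMonoidAlgebra.coeff_sum] at hx
  have hx' := Finsupp.support_finset_sum hx
  rw [Finset.mem_biUnion] at hx'
  obtain ⟨j, hj, hxj⟩ := hx'
  have := Finsupp.support_single_subset hxj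
  simp only [Finset.mem_singleton] at this
  rw [this]
  simp only [ZMod.val_natCast]
  exact le_trans (Nat.mod_le _ _) (Nat.lt_succ_iff.mp (Finset.mem_range.mp hj))

theorem degV_Um_mul [NeZero L] (m : ℕ) (q : (ZMod p)[X]) :
    degV (Um p L m * aeval (vv p L) q) ≤ q.natDegree :=
  le_trans (degV_mul_le (support_usub_pow _)) (degV_aeval_vv q)

theorem isExpansion_single {m₀ : ℕ} (hm₀ : m₀ < L) (q : (ZMod p)[X])
    (hq : q.degree < (L : WithBot ℕ)) :
    IsExpansion p L (Um p L m₀ * aeval (vv p L) q) (fun m => if m = m₀ then q else 0) := by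
  constructor
  · intro m _
    by_cases hm : m = m₀
    · simpa [hm] using hq
    · simp only [hm, if_false, Polynomial.degree_zero]
      exact lt_of_lt_of_le (WithBot.bot_lt_coe 0) (by exact_mod_cast Nat.zero_le L)
  · rw [Finset.sum_eq_single_of_mem m₀ (Finset.mem_range.mpr hm₀)]
    · simp
    · intro b _ hb
      simp [hb]

theorem th_mul (h : (ZMod p)[X]) (A W : R p L) : th h (A * W) = A * th h W := by
  unfold th; ring

theorem th_iter_mul (h : (ZMod p)[X]) (A W : R p L) (n : ℕ) :
    (th h)^[n] (A * W) = A * (th h)^[n] W := by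
  induction n with
  | zero => rfl
  | succ n ih => rw [Function.iterate_succ_apply', Function.iterate_succ_apply', ih, th_mul]

theorem consLocal_usub_mul {h : (ZMod p)[X]} {ℓ : ℕ} {W : R p L}
    (hcons : ConsLocal h ℓ W) (k : ℕ) : ConsLocal h ℓ ((uu p L - 1) ^ k * W) := by
  intro n
  rw [th_iter_mul]
  exact le_trans (degV_mul_le (support_usub_pow k)) (hcons n)

end Aux3

section Aux4

open AddMonoidAlgebra Finset

variable {p L : ℕ}

theorem expansion_zero (hp : p.Prime) {N : ℕ} (hL : L = p ^ N) {g : ℕ → (ZMod p)[X]}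
    (hg : IsExpansion p L 0 g) : ∀ m < L, g m = 0 := by
  classical
  by_contra hcon
  push_neg at hcon
  obtain ⟨m₁, hm₁L, hm₁⟩ := hcon
  set S : Finset ℕ := (Finset.range L).filter (fun m => g m ≠ 0) with hS
  have hne : S.Nonempty := ⟨m₁, by simp [hS, hm₁L, hm₁]⟩
  set m₀ := S.max' hne with hm₀
  have hm₀S : m₀ ∈ S := S.max'_mem hne
  have hm₀L : m₀ < L := Finset.mem_range.mp (Finset.mem_filter.mp hm₀S).1
  have hgm₀ : g m₀ ≠ 0 := (Finset.mem_filter.mp hm₀S).2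
  have hmax : ∀ m ∈ S, m ≤ m₀ := fun m hm => S.le_max' m hm
  have hsum := hg.2
  have h0 : (uu p L - 1) ^ (L - 1) * aeval (vv p L) (g m₀) = 0 := by
    have h1 : (uu p L - 1) ^ m₀ * (0 : R p L)
        = ∑ m ∈ range L, (uu p L - 1) ^ (m₀ + (L - 1 - m)) * aeval (vv p L) (g m) := by
      rw [hsum, Finset.mul_sum]
      refine Finset.sum_congr rfl fun m _ => ?_
      rw [Um, ← mul_assoc, ← pow_add]
    rw [mul_zero] at h1
    rw [Finset.sum_eq_single_of_mem m₀ (Finset.mem_range.mpr hm₀L)] at h1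
    · rw [show m₀ + (L - 1 - m₀) = L - 1 by omega] at h1
      exact h1.symm
    · intro m hmL hne'
      by_cases hgm : g m = 0
      · rw [hgm, map_zero, mul_zero]
      · have hmS : m ∈ S := Finset.mem_filter.mpr ⟨Finset.mem_range.mpr (Finset.mem_range.mp hmL), hgm⟩
        have hmlt : m < m₀ := lt_of_le_of_ne (hmax m hmS) hne'
        have hexp : m₀ + (L - 1 - m) = L + (m₀ - m - 1) := by omega
        rw [hexp, pow_add, usub_pow_L hp hL, zero_mul, zero_mul]
  exact hgm₀ (key_inj' hp hL (g m₀) (hg.1 m₀ hm₀L) h0)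

theorem expansion_unique (hp : p.Prime) {N : ℕ} (hL : L = p ^ N) {W : R p L}
    {g g' : ℕ → (ZMod p)[X]} (hg : IsExpansion p L W g) (hg' : IsExpansion p L W g') :
    ∀ m < L, g m = g' m := by
  intro m hm
  have hz : IsExpansion p L 0 (fun m => g m - g' m) := by
    constructor
    · intro k hk
      exact lt_of_le_of_lt (Polynomial.degree_sub_le _ _) (max_lt (hg.1 k hk) (hg'.1 k hk))
    · have hd : ∑ m ∈ Finset.range L, Um p L m * aeval (vv p L) (g m - g' m)
          = (∑ m ∈ Finset.range L, Um p L m * aeval (vv p L) (g m))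
            - ∑ m ∈ Finset.range L, Um p L m * aeval (vv p L) (g' m) := by
        rw [← Finset.sum_sub_distrib]
        refine Finset.sum_congr rfl fun k _ => ?_
        rw [map_sub, mul_sub]
      rw [hd, ← hg.2, ← hg'.2, sub_self]
  have := expansion_zero hp hL hz m hm
  simpa [sub_eq_zero] using this

theorem uu_mul_U0 (hp : p.Prime) {N : ℕ} (hL : L = p ^ N) :
    uu p L * Um p L 0 = Um p L 0 := by
  have hL1 : 1 ≤ L := by subst hL; exact Nat.one_le_pow _ _ hp.pos
  have h1 : (uu p L - 1) * Um p L 0 = 0 := by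
    rw [Um, Nat.sub_zero, ← pow_succ']
    rw [show L - 1 + 1 = L by omega]
    exact usub_pow_L hp hL
  have h2 : uu p L * Um p L 0 - Um p L 0 = 0 := by rw [← h1]; ring
  exact sub_eq_zero.mp h2

theorem uvpow_mul_U0 (hp : p.Prime) {N : ℕ} (hL : L = p ^ N) (j : ℕ) :
    (uu p L * vv p L) ^ j * Um p L 0 = vv p L ^ j * Um p L 0 := by
  have huu : ∀ j : ℕ, uu p L ^ j * Um p L 0 = Um p L 0 := by
    intro j
    induction j with
    | zero => rw [pow_zero, one_mul]
    | succ j ih => rw [pow_succ', mul_assoc, ih, uu_mul_U0 hp hL]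
  rw [mul_pow, mul_comm (uu p L ^ j) (vv p L ^ j), mul_assoc, huu j]

theorem aeval_uv_mul_U0 (hp : p.Prime) {N : ℕ} (hL : L = p ^ N) (h : (ZMod p)[X]) :
    aeval (uu p L * vv p L) h * Um p L 0 = aeval (vv p L) h * Um p L 0 := by
  rw [aeval_eq_sum_range (x := uu p L * vv p L), aeval_eq_sum_range (x := vv p L),
    Finset.sum_mul, Finset.sum_mul]
  refine Finset.sum_congr rfl fun j _ => ?_
  rw [smul_mul_assoc, smul_mul_assoc, uvpow_mul_U0 hp hL]

theorem isUnit_aeval_vv (hp : p.Prime) {N : ℕ} (hL : L = p ^ N) {h : (ZMod p)[X]}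
    (hh1 : h.eval 1 ≠ 0) : IsUnit (aeval (vv p L) h) := by
  haveI := Fact.mk hp
  have hL1 : 1 ≤ L := by subst hL; exact Nat.one_le_pow _ _ hp.pos
  have hpow : (aeval (vv p L) h) ^ L = algebraMap (ZMod p) (R p L) (h.eval 1) := by
    rw [← map_pow]
    have hexp : h ^ L = Polynomial.expand (ZMod p) L h := by
      rw [hL, ← Polynomial.map_iterateFrobenius_expand p,
        show iterateFrobenius (ZMod p) p N = RingHom.id (ZMod p) from RingHom.ext_zmod _ _]
      rw [Polynomial.map_id]
    rw [hexp, Polynomial.expand_aeval, vv_pow_L]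
    rw [show (1 : R p L) = algebraMap (ZMod p) (R p L) 1 from (map_one _).symm,
      Polynomial.aeval_algebraMap_apply]
    congr 1 <;> simp [Polynomial.coe_aeval_eq_eval]
  have hu : IsUnit ((aeval (vv p L) h) ^ L) := by
    rw [hpow]; exact (Ne.isUnit hh1).map (algebraMap (ZMod p) (R p L))
  obtain ⟨u, hu⟩ := hu
  refine IsUnit.of_mul_eq_one ((aeval (vv p L) h) ^ (L - 1) * ↑u⁻¹) ?_
  rw [← mul_assoc, ← pow_succ', show L - 1 + 1 = L by omega, ← hu, Units.mul_inv]

theorem th_U0 (hp : p.Prime) {N : ℕ} (hL : L = p ^ N) {h : (ZMod p)[X]}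
    (hh1 : h.eval 1 ≠ 0) : th h (Um p L 0) = Um p L 0 := by
  unfold th
  rw [mul_assoc, aeval_uv_mul_U0 hp hL, ← mul_assoc,
    Ring.inverse_mul_cancel _ (isUnit_aeval_vv hp hL hh1), one_mul]

theorem consLocal_U0 (hp : p.Prime) {N : ℕ} (hL : L = p ^ N) {h : (ZMod p)[X]}
    (hh1 : h.eval 1 ≠ 0) (ℓ : ℕ) : ConsLocal h ℓ (Um p L 0) := by
  haveI : NeZero L := ⟨by have := Nat.one_le_pow N p hp.pos; omega⟩
  intro n
  have hfix : (th h)^[n] (Um p L 0) = Um p L 0 := by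
    induction n with
    | zero => rfl
    | succ n ih => rw [Function.iterate_succ_apply', ih, th_U0 hp hL hh1]
  rw [hfix]
  refine Finset.sup_le fun a ha => ?_
  rw [support_usub_pow _ a ha]
  simp

end Aux4


/-- if `(V_m)` generates an optimal basis for `t_h` at every locality for all
sufficiently large sizes, then `V_0` is a nonzero constant and `V_m ∣ V_{m'}` for `m ≤ m'`. -/
theorem statement1 (p : ℕ) (hp : p.Prime) (h : (ZMod p)[X]) (hh1 : h.eval 1 ≠ 0)
    (V : ℕ → (ZMod p)[X])
    (hopt : ∀ ℓ : ℕ, ∃ N₀ : ℕ, ∀ N ≥ N₀, GenOptBasis p (p ^ N) h V ℓ) :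
    (V 0).degree = 0 ∧ ∀ m m' : ℕ, m ≤ m' → V m ∣ V m' := by
  haveI := Fact.mk hp
  constructor
  · -- V 0 is a nonzero constant
    obtain ⟨N₀, hN₀⟩ := hopt 0
    have hG := hN₀ N₀ le_rfl
    set L := p ^ N₀ with hL
    have hL1 : 1 ≤ L := Nat.one_le_pow _ _ hp.pos
    haveI : NeZero L := ⟨by omega⟩
    have hdeg1 : ((1 : (ZMod p)[X])).degree < (L : WithBot ℕ) := by
      rw [Polynomial.degree_one]
      exact_mod_cast hL1
    have hexp := isExpansion_single (p := p) (L := L) hL1 (1 : (ZMod p)[X]) hdeg1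
    have hW : Um p L 0 * aeval (vv p L) (1 : (ZMod p)[X]) = Um p L 0 := by
      rw [map_one, mul_one]
    have hdegV : degV (Um p L 0 * aeval (vv p L) (1 : (ZMod p)[X])) ≤ 0 := by
      simpa using degV_Um_mul (L := L) 0 (1 : (ZMod p)[X])
    have hcons : ConsLocal h 0 (Um p L 0 * aeval (vv p L) (1 : (ZMod p)[X])) := by
      rw [hW]
      exact consLocal_U0 hp hL hh1 0
    have hdvd := (hG _ hdegV).mp hcons _ hexp 0 hL1
    simp only [if_pos rfl] at hdvd
    have : IsUnit (V 0) := isUnit_of_dvd_one hdvd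
    exact Polynomial.degree_eq_zero_of_isUnit this
  · -- divisibility
    intro m m' hmm'
    by_cases hV : V m' = 0
    · rw [hV]; exact dvd_zero _
    set ℓ := (V m').natDegree with hℓ
    obtain ⟨N₀, hN₀⟩ := hopt ℓ
    set N := max N₀ (m' + ℓ + 1) with hN
    have hG := hN₀ N (le_max_left _ _)
    set L := p ^ N with hL
    haveI : NeZero L := ⟨by have := Nat.one_le_pow N p hp.pos; omega⟩
    have hNL : N < L := Nat.lt_pow_self hp.one_lt
    have hm'L : m' < L := by
      have : m' + ℓ + 1 ≤ N := le_max_right _ _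
      omega
    have hmL : m < L := by omega
    have hℓL : ℓ < L := by
      have : m' + ℓ + 1 ≤ N := le_max_right _ _
      omega
    have hdeg : (V m').degree < (L : WithBot ℕ) := by
      refine lt_of_le_of_lt (Polynomial.degree_le_natDegree) ?_
      exact_mod_cast hℓL
    -- Step 1: W' = U_{m'} · V_{m'}(v) is consistently ℓ-local
    have hexp' := isExpansion_single (p := p) (L := L) hm'L (V m') hdeg
    have hdegV' : degV (Um p L m' * aeval (vv p L) (V m')) ≤ ℓ := degV_Um_mul m' (V m')
    have hcons' : ConsLocal h ℓ (Um p L m' * aeval (vv p L) (V m')) := by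
      refine (hG _ hdegV').mpr ?_
      intro g hg k hk
      have huniq := expansion_unique hp hL hg hexp' k hk
      rw [huniq]
      by_cases hkm : k = m'
      · simp [hkm]
      · simp [hkm]
    -- Step 2: multiply by (u-1)^(m'-m)
    have hcons'' := consLocal_usub_mul hcons' (m' - m)
    have hW'' : (uu p L - 1) ^ (m' - m) * (Um p L m' * aeval (vv p L) (V m'))
        = Um p L m * aeval (vv p L) (V m') := by
      rw [Um, Um, ← mul_assoc, ← pow_add]
      congr 2
      omega
    rw [hW''] at hcons''
    -- Step 3: apply the forward direction at index m
    have hdegV'' : degV (Um p L m * aeval (vv p L) (V m')) ≤ ℓ := degV_Um_mul m (V m')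
    have hexp'' := isExpansion_single (p := p) (L := L) hmL (V m') hdeg
    have hdvd := (hG _ hdegV'').mp hcons'' _ hexp'' m hmL
    simpa using hdvd

end
end

section
/- Let p be a prime and let h ∈ 𝔽_p[x] be irreducible with h(0) ≠ 0 and h(1) ≠ 0. Then for every ℓ ≥ 0 there exists N₀ such that for all N ≥ N₀ (with L = p^N), the family (h(v)^m)_{m≥0} generates an optimal basis for t_h at locality ℓ at size L. -/
open Polynomial

noncomputable section

namespace S4

variable {p L : ℕ} [Fact (Nat.Prime p)]

def aa (p L : ℕ) : R p L := uu p L - 1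

lemma Um_eq (m : ℕ) : Um p L m = aa p L ^ (L - 1 - m) := rfl

lemma one_def : (1 : R p L) = AddMonoidAlgebra.single (0,0) 1 := rfl

lemma uu_pow (i : ℕ) : uu p L ^ i = AddMonoidAlgebra.single ((i : ZMod L), 0) 1 := by
  induction i with
  | zero => simp [one_def]
  | succ n ih =>
      rw [pow_succ, ih, uu, AddMonoidAlgebra.single_mul_single]
      push_cast
      norm_num [add_comm]

lemma vv_pow (j : ℕ) : vv p L ^ j = AddMonoidAlgebra.single (0, (j : ZMod L)) 1 := by
  induction j with
  | zero => simp [one_def]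
  | succ n ih =>
      rw [pow_succ, ih, vv, AddMonoidAlgebra.single_mul_single]
      push_cast
      norm_num [add_comm]

lemma uu_mul_vv_pow (t j : ℕ) :
    uu p L ^ t * vv p L ^ j = AddMonoidAlgebra.single ((t : ZMod L), (j : ZMod L)) 1 := by
  rw [uu_pow, vv_pow, AddMonoidAlgebra.single_mul_single]
  norm_num

/-- Normal form of a product `q(u) * f(v)`. -/
lemma NF (q f : (ZMod p)[X]) {Kq Kf : ℕ} (hq : q.natDegree < Kq) (hf : f.natDegree < Kf) :
    aeval (uu p L) q * aeval (vv p L) f =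
      ∑ t ∈ Finset.range Kq, ∑ j ∈ Finset.range Kf,
        (q.coeff t * f.coeff j) • AddMonoidAlgebra.single ((t : ZMod L), (j : ZMod L)) (1 : ZMod p) := by
  rw [aeval_eq_sum_range' hq, aeval_eq_sum_range' hf, Finset.sum_mul_sum]
  refine Finset.sum_congr rfl fun t _ => Finset.sum_congr rfl fun j _ => ?_
  rw [smul_mul_smul_comm, uu_mul_vv_pow]

variable [NeZero L]
set_option linter.unusedSectionVars false

lemma NF_apply (q f : (ZMod p)[X]) (hq : q.natDegree < L) (hf : f.natDegree < L)
    (i j : ZMod L) :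
    (aeval (uu p L) q * aeval (vv p L) f).coeff (i, j) = q.coeff i.val * f.coeff j.val := by
  rw [NF q f hq hf]
  rw [AddMonoidAlgebra.coeff_sum, Finsupp.finset_sum_apply]
  have key : ∀ t ∈ Finset.range L, (∑ j' ∈ Finset.range L,
      (q.coeff t * f.coeff j') • AddMonoidAlgebra.single ((t : ZMod L), (j' : ZMod L)) (1 : ZMod p)).coeff (i, j)
      = if t = i.val then q.coeff t * f.coeff j.val else 0 := by
    intro t ht
    rw [AddMonoidAlgebra.coeff_sum, Finsupp.finset_sum_apply]
    have inner : ∀ j' ∈ Finset.range L,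
        ((q.coeff t * f.coeff j') • AddMonoidAlgebra.single ((t : ZMod L), (j' : ZMod L)) (1 : ZMod p)).coeff (i, j)
        = if (t = i.val ∧ j' = j.val) then q.coeff t * f.coeff j' else 0 := by
      intro j' hj'
      rw [AddMonoidAlgebra.coeff_smul, Finsupp.smul_apply, AddMonoidAlgebra.coeff_single,
        Finsupp.single_apply]
      have hcond : (((t : ZMod L), (j' : ZMod L)) = (i, j)) ↔ (t = i.val ∧ j' = j.val) := by
        constructor
        · intro hEq
          obtain ⟨h1, h2⟩ := Prod.mk.injEq .. ▸ hEq
          rw [Prod.ext_iff] at hEq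
          refine ⟨?_, ?_⟩
          · have := congrArg ZMod.val hEq.1
            rwa [ZMod.val_cast_of_lt (Finset.mem_range.mp ht)] at this
          · have := congrArg ZMod.val hEq.2
            rwa [ZMod.val_cast_of_lt (Finset.mem_range.mp hj')] at this
        · rintro ⟨rfl, rfl⟩
          rw [ZMod.natCast_val, ZMod.natCast_val, ZMod.cast_id, ZMod.cast_id]
      simp only [hcond]
      split
      · next hcase => rw [smul_eq_mul, mul_one, hcase.2]
      · simp
    rw [Finset.sum_congr rfl inner]
    by_cases hti : t = i.val
    · subst hti
      simp only [eq_self_iff_true, true_and, if_pos]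
      rw [Finset.sum_ite_eq' (Finset.range L) j.val (fun j' => q.coeff i.val * f.coeff j')]
      rw [if_pos (Finset.mem_range.mpr (ZMod.val_lt j))]
    · rw [if_neg hti]
      apply Finset.sum_eq_zero
      intro j' _
      rw [if_neg (by tauto)]
  rw [Finset.sum_congr rfl key]
  rw [Finset.sum_ite_eq' (Finset.range L) i.val]
  rw [if_pos (Finset.mem_range.mpr (ZMod.val_lt i))]


/-- support of `q(u) * f(v)` has `v`-degrees bounded by `natDegree f`. -/
lemma NF_support (q f : (ZMod p)[X]) (hf : f.natDegree < L) :
    ∀ x ∈ (aeval (uu p L) q * aeval (vv p L) f).coeff.support, x.2.val ≤ f.natDegree := by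
  classical
  intro x hx
  rw [NF q f (Nat.lt_succ_self _) (Nat.lt_succ_self _), AddMonoidAlgebra.coeff_sum] at hx
  have h1 := Finsupp.support_finset_sum (s := Finset.range (q.natDegree + 1)) (f := fun t =>
    (∑ j ∈ Finset.range (f.natDegree + 1),
        (q.coeff t * f.coeff j) • AddMonoidAlgebra.single ((t : ZMod L), (j : ZMod L)) (1 : ZMod p)).coeff) hx
  obtain ⟨t, ht, hx2⟩ := Finset.mem_biUnion.mp h1
  rw [AddMonoidAlgebra.coeff_sum] at hx2
  have h2 := Finsupp.support_finset_sum (s := Finset.range (f.natDegree + 1)) (f := fun j =>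
    ((q.coeff t * f.coeff j) • AddMonoidAlgebra.single ((t : ZMod L), (j : ZMod L)) (1 : ZMod p)).coeff) hx2
  obtain ⟨j, hj, hx3⟩ := Finset.mem_biUnion.mp h2
  rw [AddMonoidAlgebra.coeff_smul] at hx3
  have h4 : x ∈ (AddMonoidAlgebra.single ((t : ZMod L), (j : ZMod L)) (1 : ZMod p) : R p L).coeff.support :=
    Finsupp.support_smul hx3
  rw [AddMonoidAlgebra.coeff_single] at h4
  have h5 : x = ((t : ZMod L), (j : ZMod L)) := by
    have := Finsupp.support_single_subset h4
    simpa using this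
  subst h5
  have hj' : j ≤ f.natDegree := Nat.lt_succ_iff.mp (Finset.mem_range.mp hj)
  have hjL : j < L := lt_of_le_of_lt hj' hf
  simpa [ZMod.val_cast_of_lt hjL] using hj'

lemma degV_le_iff {W : R p L} {n : ℕ} : degV W ≤ n ↔ ∀ x ∈ W.coeff.support, x.2.val ≤ n :=
  Finset.sup_le_iff

/-- Θ : expansion sum. -/
def Θ (p L : ℕ) (g : ℕ → (ZMod p)[X]) : R p L :=
  ∑ m ∈ Finset.range L, Um p L m * aeval (vv p L) (g m)

lemma Um_eq_aeval (m : ℕ) : Um p L m = aeval (uu p L) (((X : (ZMod p)[X]) - 1) ^ (L - 1 - m)) := by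
  rw [map_pow, map_sub, aeval_X, map_one]; rfl

lemma theta_local {g : ℕ → (ZMod p)[X]} {ℓ : ℕ} (hg : ∀ m < L, (g m).natDegree ≤ ℓ)
    (hl : ℓ < L) : degV (Θ p L g) ≤ ℓ := by
  classical
  rw [degV_le_iff]
  intro x hx
  unfold Θ at hx
  rw [AddMonoidAlgebra.coeff_sum] at hx
  obtain ⟨m, hm, hx2⟩ := Finset.mem_biUnion.mp (Finsupp.support_finset_sum hx)
  rw [Um_eq_aeval] at hx2
  have := NF_support (((X : (ZMod p)[X]) - 1) ^ (L - 1 - m)) (g m)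
      (lt_of_le_of_lt (hg m (Finset.mem_range.mp hm)) hl) x hx2
  exact le_trans this (hg m (Finset.mem_range.mp hm))

lemma theta_congr {g g' : ℕ → (ZMod p)[X]} (hgg : ∀ m < L, g m = g' m) :
    Θ p L g = Θ p L g' :=
  Finset.sum_congr rfl fun m hm => by rw [hgg m (Finset.mem_range.mp hm)]

lemma theta_sub (g g' : ℕ → (ZMod p)[X]) :
    Θ p L (fun m => g m - g' m) = Θ p L g - Θ p L g' := by
  unfold Θ
  simp only [map_sub, mul_sub, Finset.sum_sub_distrib]

lemma phi_mul_theta (q : (ZMod p)[X]) (g : ℕ → (ZMod p)[X]) :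
    aeval (vv p L) q * Θ p L g = Θ p L (fun m => q * g m) := by
  unfold Θ
  rw [Finset.mul_sum]
  exact Finset.sum_congr rfl fun m _ => by simp only [map_mul]; ring

lemma theta_sum {ι : Type*} (s : Finset ι) (G : ι → ℕ → (ZMod p)[X]) :
    Θ p L (fun m => ∑ i ∈ s, G i m) = ∑ i ∈ s, Θ p L (G i) := by
  unfold Θ
  rw [Finset.sum_comm]
  exact Finset.sum_congr rfl fun m _ => by rw [map_sum, Finset.mul_sum]

lemma aa_pow_zero_of_ge (hnil : aa p L ^ L = 0) {k : ℕ} (hk : L ≤ k) : aa p L ^ k = 0 := by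
  rw [← Nat.sub_add_cancel hk, pow_add, hnil, mul_zero]

lemma shift (hnil : aa p L ^ L = 0) (g : ℕ → (ZMod p)[X]) (hg0 : ∀ m, L ≤ m → g m = 0)
    (k : ℕ) :
    aa p L ^ k * Θ p L g = Θ p L (fun m => g (m + k)) := by
  by_cases hkL : L ≤ k
  · rw [aa_pow_zero_of_ge hnil hkL, zero_mul]
    symm
    apply Finset.sum_eq_zero
    intro m _
    have : g (m + k) = 0 := hg0 _ (le_trans hkL (Nat.le_add_left _ _))
    simp [this]
  push_neg at hkL
  have step1 : Θ p L (fun m => g (m + k)) =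
      ∑ m ∈ Finset.range (L - k), aa p L ^ (L - 1 - m) * aeval (vv p L) (g (m + k)) := by
    unfold Θ
    symm
    apply Finset.sum_subset
    · exact Finset.range_subset_range.mpr (Nat.sub_le _ _)
    · intro m hm hm'
      have hLmk : L ≤ m + k := by
        simp only [Finset.mem_range] at hm hm'
        omega
      have : g (m + k) = 0 := hg0 _ hLmk
      simp [this]
  rw [step1]
  unfold Θ
  rw [Finset.mul_sum]
  have step2 : ∀ m ∈ Finset.range L,
      aa p L ^ k * (Um p L m * aeval (vv p L) (g m)) =
        if k ≤ m then aa p L ^ (L - 1 - (m - k)) * aeval (vv p L) (g m) else 0 := by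
    intro m hm
    rw [Um_eq, ← mul_assoc, ← pow_add]
    by_cases hkm : k ≤ m
    · rw [if_pos hkm]
      congr 2
      simp only [Finset.mem_range] at hm
      omega
    · rw [if_neg hkm]
      have : L ≤ k + (L - 1 - m) := by
        simp only [Finset.mem_range] at hm
        omega
      rw [aa_pow_zero_of_ge hnil this, zero_mul]
  rw [Finset.sum_congr rfl step2, Finset.sum_ite, Finset.sum_const_zero, add_zero]
  have hbij : Finset.filter (fun m => k ≤ m) (Finset.range L) = Finset.Ico k L := by
    ext m
    simp [Finset.mem_filter, Finset.mem_Ico, and_comm]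
  rw [hbij, Finset.sum_Ico_eq_sum_range]
  apply Finset.sum_congr rfl ?_
  intro m hm
  simp only [Finset.mem_range] at hm
  rw [add_comm k m]
  congr 2
  omega

lemma geom_coeff_zero : (∑ i ∈ Finset.range L, (X : (ZMod p)[X]) ^ i).coeff 0 = 1 := by
  rw [Polynomial.finset_sum_coeff]
  have : ∀ i ∈ Finset.range L, ((X : (ZMod p)[X]) ^ i).coeff 0 = if i = 0 then 1 else 0 := by
    intro i _
    rw [Polynomial.coeff_X_pow]
    by_cases h : i = 0 <;> simp [h, eq_comm]
  rw [Finset.sum_congr rfl this, Finset.sum_ite_eq' (Finset.range L) 0 (fun _ => (1 : ZMod p))]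
  rw [if_pos (Finset.mem_range.mpr (Nat.pos_of_ne_zero (NeZero.ne L)))]

lemma extract (hgeom : ((X : (ZMod p)[X]) - 1) ^ (L - 1) = ∑ i ∈ Finset.range L, (X : (ZMod p)[X]) ^ i)
    (f : (ZMod p)[X]) (hf : f.natDegree < L)
    (hz : aa p L ^ (L - 1) * aeval (vv p L) f = 0) : f = 0 := by
  set q : (ZMod p)[X] := ∑ i ∈ Finset.range L, (X : (ZMod p)[X]) ^ i with hqdef
  have hq : q.natDegree < L := by
    have h1 : q.natDegree ≤ L - 1 := by
      apply Polynomial.natDegree_sum_le_of_forall_le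
      intro i hi
      rw [Polynomial.natDegree_X_pow]
      exact Nat.le_sub_one_of_lt (Finset.mem_range.mp hi)
    have hL : 0 < L := Nat.pos_of_ne_zero (NeZero.ne L)
    omega
  have haq : aa p L ^ (L - 1) = aeval (uu p L) q := by
    rw [← hgeom, map_pow, map_sub, aeval_X, map_one]; rfl
  ext n
  rw [Polynomial.coeff_zero]
  by_cases hn : n < L
  · have happ := NF_apply q f hq hf 0 ((n : ZMod L))
    rw [← haq, hz] at happ
    rw [AddMonoidAlgebra.coeff_zero, Finsupp.zero_apply] at happ
    rw [ZMod.val_zero, ZMod.val_cast_of_lt hn] at happ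
    rw [geom_coeff_zero] at happ
    rw [one_mul] at happ
    exact happ.symm
  · exact Polynomial.coeff_eq_zero_of_natDegree_lt (lt_of_lt_of_le hf (le_of_not_gt hn))

lemma theta_zero (hnil : aa p L ^ L = 0)
    (hgeom : ((X : (ZMod p)[X]) - 1) ^ (L - 1) = ∑ i ∈ Finset.range L, (X : (ZMod p)[X]) ^ i)
    (f : ℕ → (ZMod p)[X]) (hfd : ∀ m < L, (f m).natDegree < L)
    (hf0 : ∀ m, L ≤ m → f m = 0) (hz : Θ p L f = 0) : ∀ m < L, f m = 0 := by
  have hL : 0 < L := Nat.pos_of_ne_zero (NeZero.ne L)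
  have key : ∀ s, s < L → f (L - 1 - s) = 0 := by
    intro s
    induction s using Nat.strong_induction_on with
    | _ s IH =>
      intro hs
      have h1 : aa p L ^ (L - 1 - s) * Θ p L f = 0 := by rw [hz, mul_zero]
      rw [shift hnil f hf0 (L - 1 - s)] at h1
      have h2 : Θ p L (fun m => f (m + (L - 1 - s))) =
          Um p L 0 * aeval (vv p L) (f (L - 1 - s)) := by
        unfold Θ
        rw [Finset.sum_eq_single_of_mem 0 (Finset.mem_range.mpr hL)]
        · norm_num
        · intro m hm hm0
          by_cases hms : s < m
          · have : f (m + (L - 1 - s)) = 0 := hf0 _ (by omega)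
            simp [this]
          · have harg : m + (L - 1 - s) = L - 1 - (s - m) := by omega
            have hz2 : f (m + (L - 1 - s)) = 0 := by
              rw [harg]
              exact IH (s - m) (by omega) (by omega)
            simp [hz2]
      rw [h2] at h1
      have h3 : Um p L 0 = aa p L ^ (L - 1) := by rw [Um_eq, Nat.sub_zero]
      rw [h3] at h1
      exact extract hgeom _ (hfd _ (by omega)) h1
  intro m hm
  have := key (L - 1 - m) (by omega)
  rwa [show L - 1 - (L - 1 - m) = m by omega] at this

lemma theta_inj (hnil : aa p L ^ L = 0)
    (hgeom : ((X : (ZMod p)[X]) - 1) ^ (L - 1) = ∑ i ∈ Finset.range L, (X : (ZMod p)[X]) ^ i)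
    (g g' : ℕ → (ZMod p)[X]) (hdg : ∀ m < L, (g m).natDegree < L)
    (hdg' : ∀ m < L, (g' m).natDegree < L) (heq : Θ p L g = Θ p L g') :
    ∀ m < L, g m = g' m := by
  set f : ℕ → (ZMod p)[X] := fun m => if m < L then g m - g' m else 0 with hfdef
  have hzf : Θ p L f = 0 := by
    have h1 : Θ p L f = Θ p L (fun m => g m - g' m) :=
      theta_congr fun m hm => by simp [hfdef, hm]
    rw [h1, theta_sub, heq, sub_self]
  have h2 := theta_zero hnil hgeom f
    (fun m hm => by
      simp only [hfdef, if_pos hm]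
      exact lt_of_le_of_lt (Polynomial.natDegree_sub_le _ _) (by
        rcases Nat.lt_or_ge ((g m).natDegree) ((g' m).natDegree) with hc | hc
        · simpa [max_eq_right hc.le] using hdg' m hm
        · simpa [max_eq_left hc] using hdg m hm))
    (fun m hm => by simp [hfdef, Nat.not_lt.mpr hm])
    hzf
  intro m hm
  have := h2 m hm
  simp only [hfdef, if_pos hm] at this
  exact sub_eq_zero.mp this

/-- Canonical expansion of `W`. -/
def cExp (p L : ℕ) (W : R p L) : ℕ → (ZMod p)[X] := fun m =>
  if m < L then
    ∑ x ∈ W.coeff.support,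
      Polynomial.monomial (x.2.val) (((x.1.val).choose (L - 1 - m) : ZMod p) * W.coeff x)
  else 0

lemma cExp_tail (W : R p L) : ∀ m, L ≤ m → cExp p L W m = 0 := fun m hm => by
  simp [cExp, Nat.not_lt.mpr hm]

lemma cExp_deg (W : R p L) : ∀ m, (cExp p L W m).natDegree ≤ degV W := by
  intro m
  unfold cExp
  split
  · apply Polynomial.natDegree_sum_le_of_forall_le
    intro x hx
    exact le_trans (Polynomial.natDegree_monomial_le _)
      (Finset.le_sup (f := fun a : ZMod L × ZMod L => a.2.val) hx)
  · simp

lemma binom_smul_aa_pow (i1 : ℕ) (hi1 : i1 < L) :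
    ∑ s ∈ Finset.range L, (i1.choose s : ZMod p) • aa p L ^ s = uu p L ^ i1 := by
  have hconv : ∀ s : ℕ, (i1.choose s : ZMod p) • aa p L ^ s = i1.choose s • aa p L ^ s := fun s =>
    Nat.cast_smul_eq_nsmul (ZMod p) _ _
  simp only [hconv]
  have hsub : ∑ s ∈ Finset.range L, i1.choose s • aa p L ^ s
      = ∑ s ∈ Finset.range (i1 + 1), i1.choose s • aa p L ^ s := by
    symm
    apply Finset.sum_subset (Finset.range_subset_range.mpr hi1)
    intro s hs hs'
    rw [Nat.choose_eq_zero_of_lt (by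
      simp only [Finset.mem_range] at hs hs'; omega), zero_smul]
  rw [hsub]
  have h1 : uu p L = aa p L + 1 := by rw [aa]; ring
  rw [h1, add_pow]
  apply Finset.sum_congr rfl
  intro s _
  rw [one_pow, mul_one, mul_comm, ← nsmul_eq_mul]

lemma cExp_expansion (W : R p L) : Θ p L (cExp p L W) = W := by
  classical
  have step1 : Θ p L (cExp p L W) = ∑ x ∈ W.coeff.support, ∑ m ∈ Finset.range L,
      Um p L m * aeval (vv p L)
        (Polynomial.monomial (x.2.val) (((x.1.val).choose (L - 1 - m) : ZMod p) * W.coeff x)) := by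
    unfold Θ
    rw [Finset.sum_comm]
    apply Finset.sum_congr rfl
    intro m hm
    rw [show cExp p L W m = ∑ x ∈ W.coeff.support,
        Polynomial.monomial (x.2.val) (((x.1.val).choose (L - 1 - m) : ZMod p) * W.coeff x) from
      if_pos (Finset.mem_range.mp hm)]
    rw [map_sum, Finset.mul_sum]
  rw [step1]
  have step2 : ∀ x ∈ W.coeff.support, ∑ m ∈ Finset.range L,
      Um p L m * aeval (vv p L)
        (Polynomial.monomial (x.2.val) (((x.1.val).choose (L - 1 - m) : ZMod p) * W.coeff x))
      = AddMonoidAlgebra.single x (W.coeff x) := by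
    intro x hx
    have hterm : ∀ m : ℕ, Um p L m * aeval (vv p L)
        (Polynomial.monomial (x.2.val) (((x.1.val).choose (L - 1 - m) : ZMod p) * W.coeff x))
        = W.coeff x • (((x.1.val).choose (L - 1 - m) : ZMod p) • (aa p L ^ (L - 1 - m) * vv p L ^ (x.2.val))) := by
      intro m
      rw [aeval_monomial, Um_eq, ← Algebra.smul_def, mul_smul_comm, mul_smul, smul_comm]
    simp only [hterm]
    rw [← Finset.smul_sum]
    have hrefl : ∑ m ∈ Finset.range L,
        (((x.1.val).choose (L - 1 - m) : ZMod p) • (aa p L ^ (L - 1 - m) * vv p L ^ (x.2.val)))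
        = ∑ s ∈ Finset.range L,
        (((x.1.val).choose s : ZMod p) • (aa p L ^ s * vv p L ^ (x.2.val))) := by
      exact Finset.sum_range_reflect
        (fun s => ((x.1.val.choose s : ZMod p)) • (aa p L ^ s * vv p L ^ x.2.val)) L
    rw [hrefl]
    have hfac : ∑ s ∈ Finset.range L,
        (((x.1.val).choose s : ZMod p) • (aa p L ^ s * vv p L ^ (x.2.val)))
        = (∑ s ∈ Finset.range L, ((x.1.val).choose s : ZMod p) • aa p L ^ s) * vv p L ^ (x.2.val) := by
      rw [Finset.sum_mul]
      exact Finset.sum_congr rfl fun s _ => (smul_mul_assoc _ _ _).symm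
    rw [hfac, binom_smul_aa_pow _ (ZMod.val_lt x.1), uu_mul_vv_pow]
    rw [ZMod.natCast_val, ZMod.natCast_val, ZMod.cast_id, ZMod.cast_id]
    rw [AddMonoidAlgebra.smul_single', mul_one]
  rw [Finset.sum_congr rfl step2]
  exact (AddMonoidAlgebra.sum_coeff_single W : _)

/-! ### The auxiliary ring `(ZMod p)[X][Y]` and Taylor-type expansions -/

abbrev AY (p : ℕ) := Polynomial ((ZMod p)[X])

def τ (p : ℕ) : (ZMod p)[X] →ₐ[ZMod p] AY p :=
  aeval (Polynomial.C (X : (ZMod p)[X]) * (1 + (X : AY p)))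

def ev (p L : ℕ) : AY p →+* R p L :=
  eval₂RingHom (aeval (vv p L)).toRingHom (aa p L)

lemma ev_C (f : (ZMod p)[X]) : ev p L (Polynomial.C f) = aeval (vv p L) f :=
  eval₂_C _ _

lemma ev_eq_sum {F : AY p} {K : ℕ} (hK : F.natDegree < K) :
    ev p L F = ∑ s ∈ Finset.range K, aeval (vv p L) (F.coeff s) * aa p L ^ s :=
  eval₂_eq_sum_range' _ hK _

lemma tau_monomial (n : ℕ) (c : ZMod p) :
    τ p (Polynomial.monomial n c) =
      Polynomial.C (Polynomial.C c * (X : (ZMod p)[X]) ^ n) * (1 + (X : AY p)) ^ n := by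
  rw [τ, aeval_monomial, mul_pow, ← Polynomial.C_pow, ← mul_assoc]
  congr 1
  rw [Polynomial.algebraMap_apply, ← Polynomial.C_mul]
  rfl

lemma ev_tau (f : (ZMod p)[X]) : ev p L (τ p f) = aeval (uu p L * vv p L) f := by
  induction f using Polynomial.induction_on' with
  | add f g hf hg => rw [map_add, map_add, map_add, hf, hg]
  | monomial n c =>
      rw [tau_monomial, map_mul, map_pow, map_add, map_one, ev_C, aeval_monomial]
      have h1 : ev p L (X : AY p) = aa p L := eval₂_X _ _
      rw [h1, map_mul, map_pow, aeval_X, aeval_C]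
      have h2 : (1 : R p L) + aa p L = uu p L := by rw [aa]; ring
      rw [h2, mul_pow]
      ring

lemma tau_coeff_zero (f : (ZMod p)[X]) : (τ p f).coeff 0 = f := by
  induction f using Polynomial.induction_on' with
  | add f g hf hg => rw [map_add, Polynomial.coeff_add, hf, hg]
  | monomial n c =>
      rw [tau_monomial, Polynomial.coeff_C_mul, Polynomial.coeff_one_add_X_pow]
      rw [Nat.choose_zero_right, Nat.cast_one, mul_one, Polynomial.C_mul_X_pow_eq_monomial]

lemma tau_coeff_one (f : (ZMod p)[X]) : (τ p f).coeff 1 = X * Polynomial.derivative f := by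
  induction f using Polynomial.induction_on' with
  | add f g hf hg => rw [map_add, Polynomial.coeff_add, hf, hg, map_add, mul_add]
  | monomial n c =>
      rw [tau_monomial, Polynomial.coeff_C_mul, Polynomial.coeff_one_add_X_pow]
      rw [Polynomial.derivative_monomial]
      cases n with
      | zero => simp
      | succ k =>
          rw [Nat.choose_one_right, Nat.add_sub_cancel, Polynomial.X_mul_monomial,
            ← Polynomial.C_mul_X_pow_eq_monomial, Polynomial.C_mul, ← Polynomial.C_eq_natCast]
          push_cast
          ring

lemma tau_coeff_formula (f : (ZMod p)[X]) (s : ℕ) :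
    (τ p f).coeff s = ∑ k ∈ Finset.range (f.natDegree + 1),
      Polynomial.C (f.coeff k) * (X : (ZMod p)[X]) ^ k * (k.choose s : (ZMod p)[X]) := by
  conv_lhs => rw [Polynomial.as_sum_range' f (f.natDegree + 1) (Nat.lt_succ_self _)]
  rw [map_sum, Polynomial.finset_sum_coeff]
  apply Finset.sum_congr rfl
  intro k _
  rw [tau_monomial, Polynomial.coeff_C_mul, Polynomial.coeff_one_add_X_pow, mul_assoc]

lemma tau_coeff_deg (f : (ZMod p)[X]) (s : ℕ) :
    ((τ p f).coeff s).natDegree ≤ f.natDegree := by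
  rw [tau_coeff_formula]
  apply Polynomial.natDegree_sum_le_of_forall_le
  intro k hk
  refine le_trans (Polynomial.natDegree_mul_le) ?_
  have h1 : (Polynomial.C (f.coeff k) * (X : (ZMod p)[X]) ^ k).natDegree ≤ k := by
    refine le_trans (Polynomial.natDegree_mul_le) ?_
    simp [Polynomial.natDegree_C, Polynomial.natDegree_X_pow]
  have h2 : ((k.choose s : (ZMod p)[X])).natDegree = 0 := Polynomial.natDegree_natCast _
  have hk' : k ≤ f.natDegree := Nat.lt_succ_iff.mp (Finset.mem_range.mp hk)
  omega

def DP (p : ℕ) (h : (ZMod p)[X]) : AY p := τ p h - Polynomial.C h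

def PP (p : ℕ) (h : (ZMod p)[X]) (i s : ℕ) : (ZMod p)[X] := ((DP p h) ^ i).coeff s

lemma DP_coeff_deg (h : (ZMod p)[X]) (s : ℕ) :
    ((DP p h).coeff s).natDegree ≤ h.natDegree := by
  rw [DP, Polynomial.coeff_sub]
  refine le_trans (Polynomial.natDegree_sub_le _ _) (max_le (tau_coeff_deg h s) ?_)
  rcases s with _ | s
  · rw [Polynomial.coeff_C_zero]
  · rw [Polynomial.coeff_C, if_neg (Nat.succ_ne_zero s)]
    simp

lemma X_dvd_DP (h : (ZMod p)[X]) : (X : AY p) ∣ DP p h := by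
  rw [Polynomial.X_dvd_iff, DP, Polynomial.coeff_sub, tau_coeff_zero,
    Polynomial.coeff_C_zero, sub_self]

lemma DP_coeff_one (h : (ZMod p)[X]) :
    (DP p h).coeff 1 = X * Polynomial.derivative h := by
  rw [DP, Polynomial.coeff_sub, tau_coeff_one, Polynomial.coeff_C,
    if_neg (Nat.one_ne_zero), sub_zero]

lemma coeff_mul_deg_bound (q r : AY p) (a b : ℕ)
    (hq : ∀ s, (q.coeff s).natDegree ≤ a) (hr : ∀ s, (r.coeff s).natDegree ≤ b) :
    ∀ s, ((q * r).coeff s).natDegree ≤ a + b := by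
  intro s
  rw [Polynomial.coeff_mul]
  apply Polynomial.natDegree_sum_le_of_forall_le
  intro x _
  exact le_trans (Polynomial.natDegree_mul_le) (add_le_add (hq x.1) (hr x.2))

lemma PP_deg (h : (ZMod p)[X]) (i : ℕ) : ∀ s, (PP p h i s).natDegree ≤ i * h.natDegree := by
  induction i with
  | zero =>
      intro s
      rcases s with _ | s
      · simp [PP]
      · simp [PP, Polynomial.coeff_one, Nat.succ_ne_zero]
  | succ i ih =>
      intro s
      have : (DP p h) ^ (i + 1) = (DP p h) ^ i * DP p h := pow_succ _ _
      unfold PP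
      rw [this]
      have := coeff_mul_deg_bound ((DP p h) ^ i) (DP p h) (i * h.natDegree) h.natDegree
        ih (DP_coeff_deg h) s
      calc (((DP p h) ^ i * DP p h).coeff s).natDegree ≤ i * h.natDegree + h.natDegree := this
        _ = (i + 1) * h.natDegree := by ring

lemma PP_zero_lt (h : (ZMod p)[X]) {i s : ℕ} (hsi : s < i) : PP p h i s = 0 := by
  obtain ⟨r, hr⟩ := pow_dvd_pow_of_dvd (X_dvd_DP h) i
  rw [PP, hr, Polynomial.coeff_X_pow_mul', if_neg (by omega)]

lemma coeff_zero_pow (E : AY p) (i : ℕ) : (E ^ i).coeff 0 = (E.coeff 0) ^ i := by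
  induction i with
  | zero => simp
  | succ i ih => rw [pow_succ, Polynomial.mul_coeff_zero, ih, pow_succ]

lemma PP_diag (h : (ZMod p)[X]) (i : ℕ) :
    PP p h i i = ((X : (ZMod p)[X]) * Polynomial.derivative h) ^ i := by
  obtain ⟨E, hE⟩ := X_dvd_DP h
  have hE0 : E.coeff 0 = X * Polynomial.derivative h := by
    have := DP_coeff_one h
    rw [hE, Polynomial.coeff_X_mul] at this
    exact this
  rw [PP, hE, mul_pow]
  rw [show ((X : AY p) ^ i * E ^ i).coeff i = (E ^ i).coeff 0 from by
    simpa using Polynomial.coeff_X_pow_mul (E ^ i) i 0]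
  rw [coeff_zero_pow, hE0]

lemma ev_DP (h : (ZMod p)[X]) :
    ev p L (DP p h) = aeval (uu p L * vv p L) h - aeval (vv p L) h := by
  rw [DP, map_sub, ev_tau, ev_C]

/-! ### Dynamics -/

section Dyn

variable (h : (ZMod p)[X])

lemma hv_isUnit (hbnil : (vv p L - 1) ^ L = 0) (h1 : h.eval 1 ≠ 0) :
    IsUnit (aeval (vv p L) h) := by
  have hroot : (h - Polynomial.C (h.eval 1)).IsRoot 1 := by
    simp [Polynomial.IsRoot]
  obtain ⟨e, he⟩ := Polynomial.dvd_iff_isRoot.mpr hroot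
  have hh : h = Polynomial.C (h.eval 1) + (X - Polynomial.C 1) * e := by
    rw [← he]; ring
  rw [hh, map_add, map_mul, map_sub, aeval_X, aeval_C, aeval_C]
  rw [add_comm]
  apply IsNilpotent.isUnit_add_right_of_commute
  · rw [mul_comm]
    apply Commute.isNilpotent_mul_left (Commute.all _ _)
    refine ⟨L, ?_⟩
    rw [show (algebraMap (ZMod p) (R p L)) 1 = 1 from map_one _]
    exact hbnil
  · exact (Ne.isUnit h1).map (algebraMap (ZMod p) (R p L))
  · exact Commute.all _ _

lemma hv_mul_th (hU : IsUnit (aeval (vv p L) h)) (W : R p L) :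
    aeval (vv p L) h * th h W = aeval (uu p L * vv p L) h * W := by
  rw [th, ← mul_assoc, ← mul_assoc, Ring.mul_inverse_cancel _ hU, one_mul]

lemma hv_pow_iter (hU : IsUnit (aeval (vv p L) h)) (n : ℕ) (W : R p L) :
    (aeval (vv p L) h) ^ n * (th h)^[n] W = (aeval (uu p L * vv p L) h) ^ n * W := by
  induction n with
  | zero => simp
  | succ n ih =>
      rw [Function.iterate_succ_apply']
      calc (aeval (vv p L) h) ^ (n + 1) * th h ((th h)^[n] W)
          = (aeval (vv p L) h) ^ n * (aeval (vv p L) h * th h ((th h)^[n] W)) := by ring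
        _ = (aeval (vv p L) h) ^ n * (aeval (uu p L * vv p L) h * (th h)^[n] W) := by
            rw [hv_mul_th h hU]
        _ = aeval (uu p L * vv p L) h * ((aeval (vv p L) h) ^ n * (th h)^[n] W) := by ring
        _ = aeval (uu p L * vv p L) h * ((aeval (uu p L * vv p L) h) ^ n * W) := by rw [ih]
        _ = (aeval (uu p L * vv p L) h) ^ (n + 1) * W := by ring

/-- The master identity. -/
lemma master (hnil : aa p L ^ L = 0)
    (hgeom : ((X : (ZMod p)[X]) - 1) ^ (L - 1) = ∑ i ∈ Finset.range L, (X : (ZMod p)[X]) ^ i)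
    (hU : IsUnit (aeval (vv p L) h))
    {ℓ : ℕ} (W : R p L) (hW : ∀ k : ℕ, degV ((th h)^[k] W) ≤ ℓ)
    (n : ℕ) (hn : n * h.natDegree + ℓ < L) {c : ℕ} (hc : c < L) :
    h ^ n * cExp p L ((th h)^[n] W) c
      = ∑ i ∈ Finset.range (n + 1), (n.choose i : (ZMod p)[X]) *
          (h ^ (n - i) * ∑ s ∈ Finset.range ((DP p h ^ i).natDegree + 1),
            PP p h i s * cExp p L W (c + s)) := by
  have hlL : ℓ < L := by nlinarith [Nat.zero_le (n * h.natDegree)]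
  set d := h.natDegree with hd
  set Wn := (th h)^[n] W with hWn
  have hWn_deg : ∀ m, (cExp p L Wn m).natDegree ≤ ℓ := fun m => le_trans (cExp_deg _ m) (hW n)
  have hW_deg : ∀ m, (cExp p L W m).natDegree ≤ ℓ := fun m =>
    le_trans (cExp_deg _ m) (by simpa using hW 0)
  set g₁ : ℕ → (ZMod p)[X] := fun m => h ^ n * cExp p L Wn m with hg₁
  set g₂ : ℕ → (ZMod p)[X] := fun m => ∑ i ∈ Finset.range (n + 1), (n.choose i : (ZMod p)[X]) *
          (h ^ (n - i) * ∑ s ∈ Finset.range ((DP p h ^ i).natDegree + 1),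
            PP p h i s * cExp p L W (m + s)) with hg₂
  have key : Θ p L g₁ = Θ p L g₂ := by
    have e₁ : Θ p L g₁ = (aeval (vv p L) h) ^ n * Wn := by
      rw [← map_pow]
      conv_rhs => rw [← cExp_expansion (W := Wn)]
      rw [phi_mul_theta]
    have e₂ : (aeval (vv p L) h) ^ n * Wn = (aeval (uu p L * vv p L) h) ^ n * W :=
      hv_pow_iter h hU n W
    have e₃ : aeval (uu p L * vv p L) h = ev p L (DP p h) + aeval (vv p L) h := by
      rw [ev_DP]; ring
    have e₄ : (aeval (uu p L * vv p L) h) ^ n * W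
        = ∑ i ∈ Finset.range (n + 1),
            ev p L (DP p h) ^ i * (aeval (vv p L) h) ^ (n - i) * (n.choose i : R p L) * W := by
      rw [e₃, add_pow, Finset.sum_mul]
    have e₅ : ∀ i ∈ Finset.range (n + 1),
        ev p L (DP p h) ^ i * (aeval (vv p L) h) ^ (n - i) * (n.choose i : R p L) * W
        = Θ p L (fun m => (n.choose i : (ZMod p)[X]) *
            (h ^ (n - i) * ∑ s ∈ Finset.range ((DP p h ^ i).natDegree + 1),
              PP p h i s * cExp p L W (m + s))) := by
      intro i _
      have f₁ : ev p L (DP p h) ^ i = ∑ s ∈ Finset.range ((DP p h ^ i).natDegree + 1),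
          aeval (vv p L) (PP p h i s) * aa p L ^ s := by
        rw [← map_pow]
        exact ev_eq_sum (Nat.lt_succ_self _)
      have f₂ : ∀ s : ℕ, aa p L ^ s * W = Θ p L (fun m => cExp p L W (m + s)) := by
        intro s
        conv_lhs => rw [← cExp_expansion (W := W)]
        exact shift hnil _ (cExp_tail W) s
      calc ev p L (DP p h) ^ i * (aeval (vv p L) h) ^ (n - i) * (n.choose i : R p L) * W
          = (n.choose i : R p L) * ((aeval (vv p L) h) ^ (n - i) * (ev p L (DP p h) ^ i * W)) := by
            ring
        _ = (n.choose i : R p L) * ((aeval (vv p L) h) ^ (n - i) *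
              (∑ s ∈ Finset.range ((DP p h ^ i).natDegree + 1),
                aeval (vv p L) (PP p h i s) * (aa p L ^ s * W))) := by
            rw [f₁, Finset.sum_mul]
            congr 1
            congr 1
            apply Finset.sum_congr rfl
            intro s _
            ring
        _ = (n.choose i : R p L) * ((aeval (vv p L) h) ^ (n - i) *
              (∑ s ∈ Finset.range ((DP p h ^ i).natDegree + 1),
                Θ p L (fun m => PP p h i s * cExp p L W (m + s)))) := by
            congr 1
            congr 1
            apply Finset.sum_congr rfl
            intro s _
            rw [f₂ s, phi_mul_theta]
        _ = (n.choose i : R p L) * ((aeval (vv p L) h) ^ (n - i) *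
              Θ p L (fun m => ∑ s ∈ Finset.range ((DP p h ^ i).natDegree + 1),
                PP p h i s * cExp p L W (m + s))) := by
            rw [theta_sum]
        _ = Θ p L (fun m => (n.choose i : (ZMod p)[X]) *
            (h ^ (n - i) * ∑ s ∈ Finset.range ((DP p h ^ i).natDegree + 1),
              PP p h i s * cExp p L W (m + s))) := by
            rw [show ((n.choose i : R p L)) = aeval (vv p L) ((n.choose i : (ZMod p)[X])) from
              (map_natCast (aeval (vv p L)) _).symm, ← map_pow]
            simp only [phi_mul_theta]
    rw [e₁, e₂, e₄, Finset.sum_congr rfl e₅, ← theta_sum]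
  have hdeg₁ : ∀ m < L, (g₁ m).natDegree < L := by
    intro m _
    refine lt_of_le_of_lt (le_trans Polynomial.natDegree_mul_le ?_) hn
    rw [Polynomial.natDegree_pow]
    exact add_le_add_right (hWn_deg m) _
  have hdeg₂ : ∀ m < L, (g₂ m).natDegree < L := by
    intro m _
    refine lt_of_le_of_lt ?_ hn
    apply Polynomial.natDegree_sum_le_of_forall_le
    intro i hi
    have hi' : i ≤ n := Nat.lt_succ_iff.mp (Finset.mem_range.mp hi)
    refine le_trans Polynomial.natDegree_mul_le ?_
    rw [Polynomial.natDegree_natCast, zero_add]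
    refine le_trans Polynomial.natDegree_mul_le ?_
    rw [Polynomial.natDegree_pow]
    have hsum : (∑ s ∈ Finset.range ((DP p h ^ i).natDegree + 1),
        PP p h i s * cExp p L W (m + s)).natDegree ≤ i * d + ℓ := by
      apply Polynomial.natDegree_sum_le_of_forall_le
      intro s _
      refine le_trans Polynomial.natDegree_mul_le (add_le_add (PP_deg h i s) (hW_deg _))
    calc (n - i) * d + (∑ s ∈ Finset.range ((DP p h ^ i).natDegree + 1),
            PP p h i s * cExp p L W (m + s)).natDegree
        ≤ (n - i) * d + (i * d + ℓ) := add_le_add_right hsum _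
      _ = ((n - i) + i) * d + ℓ := by ring
      _ = n * d + ℓ := by rw [Nat.sub_add_cancel hi']
  exact theta_inj hnil hgeom g₁ g₂ hdeg₁ hdeg₂ key c hc

/-- Divisibility of the `G`-sums. -/
lemma Gdvd (hnil : aa p L ^ L = 0)
    (hgeom : ((X : (ZMod p)[X]) - 1) ^ (L - 1) = ∑ i ∈ Finset.range L, (X : (ZMod p)[X]) ^ i)
    (hU : IsUnit (aeval (vv p L) h))
    {ℓ : ℕ} (W : R p L) (hW : ∀ k : ℕ, degV ((th h)^[k] W) ≤ ℓ) :
    ∀ n : ℕ, n * h.natDegree + ℓ < L → ∀ c < L,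
      h ^ n ∣ ∑ s ∈ Finset.range ((DP p h ^ n).natDegree + 1),
        PP p h n s * cExp p L W (c + s) := by
  intro n
  induction n using Nat.strong_induction_on with
  | _ n IH =>
    intro hn c hc
    have hm := master h hnil hgeom hU W hW n hn hc
    rw [Finset.sum_range_succ] at hm
    rw [Nat.choose_self, Nat.cast_one, one_mul, Nat.sub_self, pow_zero, one_mul] at hm
    have hG : ∑ s ∈ Finset.range ((DP p h ^ n).natDegree + 1), PP p h n s * cExp p L W (c + s)
        = h ^ n * cExp p L ((th h)^[n] W) c
          - ∑ i ∈ Finset.range n, (n.choose i : (ZMod p)[X]) *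
            (h ^ (n - i) * ∑ s ∈ Finset.range ((DP p h ^ i).natDegree + 1),
              PP p h i s * cExp p L W (c + s)) := by
      rw [hm]; ring
    rw [hG]
    apply dvd_sub (dvd_mul_right _ _)
    apply Finset.dvd_sum
    intro i hi
    have hin : i < n := Finset.mem_range.mp hi
    have hIH := IH i hin (by
      have : i * h.natDegree ≤ n * h.natDegree := Nat.mul_le_mul_right _ (le_of_lt hin)
      omega) c hc
    obtain ⟨x, hx⟩ := hIH
    rw [hx, ← mul_assoc (h ^ (n - i)), ← pow_add]
    rw [show n - i + i = n from Nat.sub_add_cancel (le_of_lt hin)]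
    exact Dvd.dvd.mul_left (dvd_mul_right _ _) _

/-- Core theorem: consistent locality implies divisibility of canonical components. -/
lemma main_dvd (hnil : aa p L ^ L = 0)
    (hgeom : ((X : (ZMod p)[X]) - 1) ^ (L - 1) = ∑ i ∈ Finset.range L, (X : (ZMod p)[X]) ^ i)
    (hU : IsUnit (aeval (vv p L) h))
    (hdpos : 0 < h.natDegree) (hprime : Prime h)
    (hder : Polynomial.derivative h ≠ 0)
    (hnd : ¬ h ∣ (X : (ZMod p)[X]) * Polynomial.derivative h)
    {ℓ : ℕ} (hsz : (ℓ + 1) * h.natDegree + ℓ < L)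
    (W : R p L) (hW : ∀ k : ℕ, degV ((th h)^[k] W) ≤ ℓ) :
    ∀ m < L, h ^ m ∣ cExp p L W m := by
  have cap : ∀ j : ℕ, ∀ m, L - j ≤ m → m < L → h ^ (min m (ℓ + 1)) ∣ cExp p L W m := by
    intro j
    induction j with
    | zero => intro m h1 h2; omega
    | succ j IHj =>
      intro m hm1 hm2
      by_cases hcase : L - j ≤ m
      · exact IHj m hcase hm2
      push_neg at hcase
      set r := min m (ℓ + 1) with hr
      rcases Nat.eq_zero_or_pos r with hr0 | hrpos
      · rw [hr0, pow_zero]; exact one_dvd _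
      have hrm : r ≤ m := min_le_left _ _
      have hrl : r ≤ ℓ + 1 := min_le_right _ _
      set c := m - r with hcdef
      have hcL : c < L := by omega
      have hG := Gdvd h hnil hgeom hU W hW r
        (lt_of_le_of_lt (add_le_add_left (Nat.mul_le_mul_right _ hrl) _) hsz) c hcL
      have hrmem : r ∈ Finset.range ((DP p h ^ r).natDegree + 1) := by
        have hPP : PP p h r r ≠ 0 := by
          rw [PP_diag]
          exact pow_ne_zero _ (mul_ne_zero Polynomial.X_ne_zero hder)
        have := Polynomial.le_natDegree_of_ne_zero hPP
        rw [Finset.mem_range]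
        omega
      rw [← Finset.add_sum_erase _ _ hrmem] at hG
      have htail : h ^ r ∣ ∑ s ∈ (Finset.range ((DP p h ^ r).natDegree + 1)).erase r,
          PP p h r s * cExp p L W (c + s) := by
        apply Finset.dvd_sum
        intro s hs
        have hs' : s ≠ r := (Finset.mem_erase.mp hs).1
        rcases lt_or_gt_of_ne hs' with hlt | hgt
        · rw [PP_zero_lt h hlt, zero_mul]
          exact dvd_zero _
        · by_cases hcs : c + s < L
          · have hind := IHj (c + s) (by omega) hcs
            have hmin : r ≤ min (c + s) (ℓ + 1) := le_min (by omega) hrl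
            exact Dvd.dvd.mul_left ((pow_dvd_pow h hmin).trans hind) _
          · rw [cExp_tail W _ (le_of_not_gt hcs), mul_zero]
            exact dvd_zero _
      have hmain : h ^ r ∣ PP p h r r * cExp p L W (c + r) := by
        have := dvd_sub hG htail
        rwa [add_sub_cancel_right] at this
      rw [PP_diag, show c + r = m from by omega] at hmain
      have hnotdvd : ¬ h ∣ ((X : (ZMod p)[X]) * Polynomial.derivative h) ^ r := fun hcon =>
        hnd (hprime.dvd_of_dvd_pow hcon)
      exact hprime.pow_dvd_of_dvd_mul_left r hnotdvd hmain
  intro m hm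
  have hcap := cap L m (by omega) hm
  by_cases hml : m ≤ ℓ + 1
  · rwa [min_eq_left hml] at hcap
  · push_neg at hml
    rw [min_eq_right (by omega)] at hcap
    have hz : cExp p L W m = 0 := by
      by_contra hne
      have hdeg := Polynomial.natDegree_le_of_dvd hcap hne
      rw [Polynomial.natDegree_pow] at hdeg
      have hdegle : (cExp p L W m).natDegree ≤ ℓ :=
        le_trans (cExp_deg W m) (by simpa using hW 0)
      nlinarith
    rw [hz]
    exact dvd_zero _

/-- One-step invariance for the sufficiency direction. -/
lemma step_S (hnil : aa p L ^ L = 0) (hU : IsUnit (aeval (vv p L) h)) (hh0 : h ≠ 0)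
    {ℓ : ℕ} (Q : ℕ → (ZMod p)[X]) (hQ0 : ∀ m, L ≤ m → Q m = 0)
    (hQd : ∀ m, (h ^ m * Q m).natDegree ≤ ℓ) :
    ∃ Q' : ℕ → (ZMod p)[X], (∀ m, L ≤ m → Q' m = 0) ∧ (∀ m, (h ^ m * Q' m).natDegree ≤ ℓ) ∧
      th h (Θ p L (fun m => h ^ m * Q m)) = Θ p L (fun m => h ^ m * Q' m) := by
  set K := (DP p h).natDegree + 1 with hK
  set Q' : ℕ → (ZMod p)[X] :=
    fun m => Q m + ∑ s ∈ Finset.range K, PP p h 1 s * h ^ (s - 1) * Q (m + s) with hQ'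
  have hterm : ∀ m s : ℕ, h * (h ^ m * (PP p h 1 s * h ^ (s - 1) * Q (m + s)))
      = PP p h 1 s * (h ^ (m + s) * Q (m + s)) := by
    intro m s
    rcases Nat.eq_zero_or_pos s with rfl | hs
    · rw [PP_zero_lt h Nat.zero_lt_one]
      ring
    · have hpow : h * h ^ m * h ^ (s - 1) = h ^ (m + s) := by
        rw [← pow_succ', ← pow_add]
        congr 1
        omega
      calc h * (h ^ m * (PP p h 1 s * h ^ (s - 1) * Q (m + s)))
          = (h * h ^ m * h ^ (s - 1)) * (PP p h 1 s * Q (m + s)) := by ring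
        _ = h ^ (m + s) * (PP p h 1 s * Q (m + s)) := by rw [hpow]
        _ = PP p h 1 s * (h ^ (m + s) * Q (m + s)) := by ring
  refine ⟨Q', ?_, ?_, ?_⟩
  · intro m hm
    rw [hQ']
    simp only
    rw [hQ0 m hm, zero_add]
    apply Finset.sum_eq_zero
    intro s _
    rw [hQ0 (m + s) (by omega), mul_zero]
  · intro m
    have hsplit : h ^ m * Q' m = h ^ m * Q m
        + ∑ s ∈ Finset.range K, h ^ m * (PP p h 1 s * h ^ (s - 1) * Q (m + s)) := by
      rw [hQ']
      simp only
      rw [mul_add, Finset.mul_sum]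
    rw [hsplit]
    refine le_trans (Polynomial.natDegree_add_le _ _) (max_le (hQd m) ?_)
    apply Polynomial.natDegree_sum_le_of_forall_le
    intro s _
    set T := h ^ m * (PP p h 1 s * h ^ (s - 1) * Q (m + s)) with hT
    by_cases hTz : T = 0
    · rw [hTz]
      simp
    · have hrel := hterm m s
      rw [← hT] at hrel
      have hdegs : (h * T).natDegree = h.natDegree + T.natDegree :=
        Polynomial.natDegree_mul hh0 hTz
      have hrdeg : (PP p h 1 s * (h ^ (m + s) * Q (m + s))).natDegree
          ≤ h.natDegree + ℓ := by
        refine le_trans Polynomial.natDegree_mul_le (add_le_add ?_ (hQd (m + s)))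
        have := PP_deg h 1 s
        simpa using this
      rw [hrel] at hdegs
      omega
  · have hg0' : ∀ m, L ≤ m → h ^ m * Q m = 0 := fun m hm => by rw [hQ0 m hm, mul_zero]
    have theta_add : ∀ g g' : ℕ → (ZMod p)[X],
        Θ p L (fun m => g m + g' m) = Θ p L g + Θ p L g' := by
      intro g g'
      unfold Θ
      simp only [map_add, mul_add, Finset.sum_add_distrib]
    have hkey : aeval (vv p L) h * Θ p L (fun m => h ^ m * Q' m)
        = aeval (uu p L * vv p L) h * Θ p L (fun m => h ^ m * Q m) := by
      have e₃ : aeval (uu p L * vv p L) h = ev p L (DP p h) + aeval (vv p L) h := by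
        rw [ev_DP]; ring
      have fPP : ∀ s, (DP p h).coeff s = PP p h 1 s := fun s => by rw [PP, pow_one]
      have f₁ : ev p L (DP p h) = ∑ s ∈ Finset.range K,
          aeval (vv p L) (PP p h 1 s) * aa p L ^ s := by
        rw [ev_eq_sum (Nat.lt_succ_self _)]
        exact Finset.sum_congr rfl fun s _ => by rw [fPP]
      have eD : ev p L (DP p h) * Θ p L (fun m => h ^ m * Q m)
          = Θ p L (fun m => ∑ s ∈ Finset.range K,
              PP p h 1 s * (h ^ (m + s) * Q (m + s))) := by
        rw [f₁, Finset.sum_mul, theta_sum]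
        apply Finset.sum_congr rfl
        intro s _
        rw [mul_assoc, shift hnil _ hg0' s, phi_mul_theta]
      rw [e₃, add_mul, eD]
      simp only [phi_mul_theta]
      rw [← theta_add]
      apply congrArg (Θ p L)
      funext m
      have expand : h * (h ^ m * Q' m) = h * (h ^ m * Q m)
          + ∑ s ∈ Finset.range K, h * (h ^ m * (PP p h 1 s * h ^ (s - 1) * Q (m + s))) := by
        rw [hQ']
        simp only
        rw [mul_add, mul_add, Finset.mul_sum, Finset.mul_sum]
      rw [expand]
      rw [Finset.sum_congr rfl fun s _ => hterm m s]
      exact add_comm _ _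
    show Ring.inverse (aeval (vv p L) h) * aeval (uu p L * vv p L) h *
        Θ p L (fun m => h ^ m * Q m) = _
    rw [mul_assoc, ← hkey, ← mul_assoc, Ring.inverse_mul_cancel _ hU, one_mul]

end Dyn

lemma theta_def (g : ℕ → (ZMod p)[X]) :
    Θ p L g = ∑ m ∈ Finset.range L, Um p L m * aeval (vv p L) (g m) := rfl

instance instCharR : CharP (R p L) p :=
  charP_of_injective_algebraMap' (ZMod p) p

lemma aa_nil (N : ℕ) : aa p (p ^ N) ^ (p ^ N) = 0 := by
  rw [aa, sub_pow_char_pow, one_pow, uu_pow, ZMod.natCast_self, ← one_def, sub_self]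

lemma bb_nil (N : ℕ) : (vv p (p ^ N) - 1) ^ (p ^ N) = 0 := by
  rw [sub_pow_char_pow, one_pow, vv_pow, ZMod.natCast_self, ← one_def, sub_self]

lemma geom_id (N : ℕ) : ((X : (ZMod p)[X]) - 1) ^ (p ^ N - 1)
    = ∑ i ∈ Finset.range (p ^ N), (X : (ZMod p)[X]) ^ i := by
  have hL : 0 < p ^ N := pow_pos (Fact.out : Nat.Prime p).pos N
  have hX1 : (X : (ZMod p)[X]) - 1 ≠ 0 := by
    intro hcon
    have h2 : ((X : (ZMod p)[X]) - 1).natDegree = 1 := by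
      rw [show (1 : (ZMod p)[X]) = Polynomial.C 1 from (map_one _).symm]
      exact Polynomial.natDegree_X_sub_C 1
    rw [hcon] at h2
    simp at h2
  apply mul_left_cancel₀ hX1
  rw [← pow_succ']
  rw [show p ^ N - 1 + 1 = p ^ N from by omega]
  rw [sub_pow_char_pow, one_pow]
  rw [mul_comm, geom_sum_mul]

end S4

/-- if `h` is irreducible with `h(0) ≠ 0` and `h(1) ≠ 0`, then `(h(v)^m)_m`
generates an optimal basis for `t_h` at locality `ℓ`, for all sufficiently large `L = p^N`. -/
theorem statement4 (p : ℕ) (hp : p.Prime) (h : (ZMod p)[X]) (hirr : Irreducible h)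
    (h0 : h.eval 0 ≠ 0) (h1 : h.eval 1 ≠ 0) :
    ∀ ℓ : ℕ, ∃ N₀ : ℕ, ∀ N ≥ N₀, GenOptBasis p (p ^ N) h (fun m => h ^ m) ℓ := by
  haveI : Fact p.Prime := ⟨hp⟩
  intro ℓ
  have hh0 : h ≠ 0 := hirr.ne_zero
  have hdpos : 0 < h.natDegree := by
    rcases Nat.eq_zero_or_pos h.natDegree with h' | h'
    · obtain ⟨c, hc⟩ := Polynomial.natDegree_eq_zero.mp h'
      have hcne : c ≠ 0 := fun hcc => hh0 (by rw [← hc, hcc, map_zero])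
      exact absurd (hc ▸ Polynomial.isUnit_C.mpr (Ne.isUnit hcne)) hirr.not_isUnit
    · exact h'
  have hprime : Prime h := (UniqueFactorizationMonoid.irreducible_iff_prime).mp hirr
  have hder : Polynomial.derivative h ≠ 0 := by
    intro hcon
    have hsep : h.Separable := PerfectField.separable_of_irreducible hirr
    rw [Polynomial.Separable, hcon] at hsep
    exact hirr.not_isUnit (isCoprime_zero_right.mp hsep)
  have hnd : ¬ h ∣ (X : (ZMod p)[X]) * Polynomial.derivative h := by
    intro hdd
    rcases (hprime.dvd_mul).mp hdd with hX | hD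
    · obtain ⟨t, ht⟩ := hX
      have htne : t ≠ 0 := fun hcon =>
        Polynomial.X_ne_zero (R := ZMod p) (by rw [ht, hcon, mul_zero])
      have hdeg : 1 = h.natDegree + t.natDegree := by
        rw [← Polynomial.natDegree_X (R := ZMod p), ht, Polynomial.natDegree_mul hh0 htne]
      have ht0 : t.natDegree = 0 := by omega
      obtain ⟨c, hc⟩ := Polynomial.natDegree_eq_zero.mp ht0
      have heval := congrArg (Polynomial.eval 0) ht
      rw [Polynomial.eval_X, Polynomial.eval_mul] at heval
      have hev0 : Polynomial.eval 0 t = 0 := by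
        rcases mul_eq_zero.mp heval.symm with hh | htv
        · exact absurd hh h0
        · exact htv
      rw [← hc, Polynomial.eval_C] at hev0
      exact htne (by rw [← hc, hev0, map_zero])
    · have hd2 := Polynomial.natDegree_le_of_dvd hD hder
      have hd3 := Polynomial.natDegree_derivative_lt (p := h) (by omega)
      omega
  refine ⟨(ℓ + 1) * h.natDegree + ℓ + 1, ?_⟩
  intro N hN
  have hLbig : (ℓ + 1) * h.natDegree + ℓ < p ^ N := by
    have h2 : N < 2 ^ N := Nat.lt_two_pow_self
    have h3 : 2 ^ N ≤ p ^ N := Nat.pow_le_pow_left hp.two_le N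
    omega
  set L := p ^ N with hL
  have hlL : ℓ < L := by nlinarith
  haveI : NeZero L := ⟨(pow_pos hp.pos N).ne'⟩
  have hnil : S4.aa p L ^ L = 0 := S4.aa_nil (p := p) N
  have hbnil : (vv p L - 1) ^ L = 0 := S4.bb_nil (p := p) N
  have hgeom : ((X : (ZMod p)[X]) - 1) ^ (L - 1)
      = ∑ i ∈ Finset.range L, (X : (ZMod p)[X]) ^ i := S4.geom_id (p := p) N
  have hU : IsUnit (aeval (vv p L) h) := S4.hv_isUnit h hbnil h1
  intro W hdegV
  constructor
  · intro hCons g hg m hm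
    have hdvd := S4.main_dvd h hnil hgeom hU hdpos hprime hder hnd hLbig W hCons m hm
    have hWg : W = S4.Θ p L g := by rw [S4.theta_def]; exact hg.2
    have hcd : ∀ m' < L, (S4.cExp p L W m').natDegree < L := fun m' _ =>
      lt_of_le_of_lt (le_trans (S4.cExp_deg W m') hdegV) hlL
    have hgd : ∀ m' < L, (g m').natDegree < L := by
      intro m' hm'
      have hdeg := hg.1 m' hm'
      by_cases hz : g m' = 0
      · rw [hz]
        simpa using Nat.pos_of_ne_zero (NeZero.ne L)
      · exact (Polynomial.natDegree_lt_iff_degree_lt hz).mpr hdeg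
    have huniq := S4.theta_inj hnil hgeom g (S4.cExp p L W) hgd hcd
      (hWg.symm.trans (S4.cExp_expansion W).symm) m hm
    rw [huniq]
    exact hdvd
  · intro hdvd
    have hex : IsExpansion p L W (S4.cExp p L W) := by
      constructor
      · intro m hm
        refine lt_of_le_of_lt (Polynomial.degree_le_natDegree) ?_
        exact_mod_cast lt_of_le_of_lt (le_trans (S4.cExp_deg W m) hdegV) hlL
      · rw [← S4.theta_def]
        exact (S4.cExp_expansion W).symm
    have hdv := hdvd _ hex
    have hQex : ∀ m, ∃ q, (m < L → S4.cExp p L W m = h ^ m * q) := by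
      intro m
      by_cases hm : m < L
      · obtain ⟨q, hq⟩ := hdv m hm
        exact ⟨q, fun _ => hq⟩
      · exact ⟨0, fun hc => absurd hc hm⟩
    choose Q hQ using hQex
    set Q' : ℕ → (ZMod p)[X] := fun m => if m < L then Q m else 0 with hQ'd
    have hQ0 : ∀ m, L ≤ m → Q' m = 0 := fun m hm => if_neg (Nat.not_lt.mpr hm)
    have hQval : ∀ m < L, h ^ m * Q' m = S4.cExp p L W m := fun m hm => by
      rw [hQ'd]
      simp only [if_pos hm]
      exact (hQ m hm).symm
    have hQd : ∀ m, (h ^ m * Q' m).natDegree ≤ ℓ := by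
      intro m
      by_cases hm : m < L
      · rw [hQval m hm]
        exact le_trans (S4.cExp_deg W m) hdegV
      · rw [hQ'd]
        simp [if_neg hm]
    have hinv : ∀ n : ℕ, ∃ Qn : ℕ → (ZMod p)[X], (∀ m, L ≤ m → Qn m = 0) ∧
        (∀ m, (h ^ m * Qn m).natDegree ≤ ℓ) ∧
        (th h)^[n] W = S4.Θ p L (fun m => h ^ m * Qn m) := by
      intro n
      induction n with
      | zero =>
        refine ⟨Q', hQ0, hQd, ?_⟩
        simp only [Function.iterate_zero_apply]
        rw [show S4.Θ p L (fun m => h ^ m * Q' m) = S4.Θ p L (S4.cExp p L W) from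
          S4.theta_congr hQval, S4.cExp_expansion]
      | succ n ih =>
        obtain ⟨Qn, a1, a2, a3⟩ := ih
        obtain ⟨Qn', b1, b2, b3⟩ := S4.step_S h hnil hU hh0 Qn a1 a2
        exact ⟨Qn', b1, b2, by rw [Function.iterate_succ_apply', a3, b3]⟩
    intro n
    obtain ⟨Qn, a1, a2, a3⟩ := hinv n
    rw [a3]
    exact S4.theta_local (fun m _ => a2 m) hlL


end
end

section
/- Let p be a prime, L ≥ 1 an integer, and f ∈ 𝔽_p[x] a nonzero polynomial with deg f < L. Suppose q ∈ 𝔽_p[x] is nonzero with deg q < L and f·q ≡ 0 (mod x^L − 1). Then for every integer k ≥ 0, the remainder of x^k·q upon division by x^L − 1 has degree at least L − deg f. (In other words, every nonzero element of the kernel of multiplication by f on 𝔽_p[x]/(x^L − 1) is highly non-local: none of its cyclic shifts is supported on a window of fewer than L − deg f + 1 consecutive coefficients.) -/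
open Polynomial

/-- every nonzero element of the kernel of multiplication by `f` on
`𝔽_p[x]/(x^L − 1)` is highly non-local: if `f, q` are nonzero of degree `< L` and
`f·q ≡ 0 (mod x^L − 1)`, then for every shift `k`, the remainder of `x^k·q` upon
division by `x^L − 1` has degree at least `L − deg f`. -/
theorem statement11 (p : ℕ) (hp : p.Prime) (L : ℕ) (hL : 1 ≤ L)
    (f q : (ZMod p)[X]) (hf : f ≠ 0) (hfd : f.natDegree < L)
    (hq : q ≠ 0) (hqd : q.natDegree < L)
    (hmod : (f * q) %ₘ (X ^ L - 1) = 0) :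
    ∀ k : ℕ, L - f.natDegree ≤ ((X ^ k * q) %ₘ (X ^ L - 1)).natDegree := by
  have : Fact p.Prime := ⟨hp⟩
  intro k
  set D : (ZMod p)[X] := X ^ L - 1 with hD
  have hmonic : D.Monic := by
    have := monic_X_pow_sub_C (1 : ZMod p) (Nat.one_le_iff_ne_zero.mp hL)
    simpa [hD] using this
  have hDdeg : D.natDegree = L := by
    have := natDegree_X_pow_sub_C (n := L) (r := (1 : ZMod p))
    simpa [hD] using this
  have hD0 : D ≠ 0 := hmonic.ne_zero
  have hdvdfq : D ∣ f * q := (modByMonic_eq_zero_iff_dvd hmonic).mp hmod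
  set r : (ZMod p)[X] := (X ^ k * q) %ₘ D with hr
  have hcopX : IsCoprime X D := by
    refine ⟨X ^ (L - 1), -1, ?_⟩
    have : X ^ (L - 1) * X = (X : (ZMod p)[X]) ^ L := by
      rw [← pow_succ, Nat.sub_add_cancel hL]
    rw [this, hD]; ring
  have hcop : IsCoprime D (X ^ k) := (hcopX.pow_left).symm
  -- r ≠ 0
  have hrne : r ≠ 0 := by
    intro h0
    have hdvd : D ∣ X ^ k * q := (modByMonic_eq_zero_iff_dvd hmonic).mp h0
    have : D ∣ q := hcop.dvd_of_dvd_mul_left hdvd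
    have := natDegree_le_of_dvd this hq
    omega
  -- deg r < L
  have hrdeg : r.natDegree < L := by
    have h1 : r.degree < D.degree := degree_modByMonic_lt _ hmonic
    have := natDegree_lt_natDegree hrne h1
    omega
  -- D ∣ f * r
  have hdvdfr : D ∣ f * r := by
    have heq := modByMonic_add_div (X ^ k * q) D
    have h2 : f * r = (f * q) * X ^ k - D * (f * ((X ^ k * q) /ₘ D)) := by
      linear_combination f * heq
    rw [h2]
    exact dvd_sub (hdvdfq.mul_right _) ⟨f * ((X ^ k * q) /ₘ D), rfl⟩
  have hfr : f * r ≠ 0 := mul_ne_zero hf hrne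
  have hle : L ≤ (f * r).natDegree := by
    have := natDegree_le_of_dvd hdvdfr hfr
    omega
  rw [natDegree_mul hf hrne] at hle
  omega
end

section
/- Let p be a prime, k ≥ 0, N ≥ 1, L = p^N, and s ≥ 0 with 2·s·p^k < L. Let f₁, f₂ ∈ 𝔽_p[x, x^{−1}] be Laurent polynomials all of whose exponents with nonzero coefficient lie in the interval [−s, s]. If f₁(v)^{p^k} = f₂(v^{−1})^{p^k} in the quotient ring 𝔽_p[v, v^{−1}]/(v^L − 1), then f₁(x) = f₂(x^{−1}) as Laurent polynomials in 𝔽_p[x, x^{−1}]. -/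
open Pointwise in
lemma support_pow_natAbs_bound {R : Type*} [CommSemiring R] (s : ℕ)
    (f : AddMonoidAlgebra R ℤ) (hf : ∀ n ∈ f.coeff.support, n.natAbs ≤ s) (m : ℕ) :
    ∀ n ∈ (f ^ m).coeff.support, n.natAbs ≤ m * s := by
  classical
  induction m with
  | zero =>
    intro n hn
    rw [pow_zero] at hn
    have : n ∈ (Finsupp.single (0 : ℤ) (1 : R)).support := hn
    have hn0 : n = 0 := Finset.mem_singleton.1 (Finsupp.support_single_subset this)
    simp [hn0]
  | succ m ih =>
    intro n hn
    rw [pow_succ] at hn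
    obtain ⟨a, ha, b, hb, rfl⟩ := Finset.mem_add.1 (AddMonoidAlgebra.support_coeff_mul_subset (f ^ m) f hn)
    calc (a + b).natAbs ≤ a.natAbs + b.natAbs := Int.natAbs_add_le a b
      _ ≤ m * s + s := add_le_add (ih a ha) (hf b hb)
      _ = (m + 1) * s := by ring

/-- let `L = p^N`, `2·s·p^k < L`, and let `f₁, f₂` be Laurent polynomials
over `𝔽_p` all of whose exponents lie in `[−s, s]`.  If `f₁(v)^{p^k} = f₂(v⁻¹)^{p^k}` in
`𝔽_p[v,v⁻¹]/(v^L − 1)` (modelled as the group algebra of `ℤ/L`, with evaluation given by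
mapping exponents along `ℤ → ℤ/L`), then `f₁(x) = f₂(x⁻¹)` as Laurent polynomials. -/
theorem statement12 (p : ℕ) (hp : p.Prime) (k N : ℕ) (hN : 1 ≤ N) (s : ℕ)
    (hs : 2 * s * p ^ k < p ^ N)
    (f₁ f₂ : LaurentPolynomial (ZMod p))
    (hf₁ : ∀ n ∈ f₁.coeff.support, n.natAbs ≤ s)
    (hf₂ : ∀ n ∈ f₂.coeff.support, n.natAbs ≤ s)
    (heq :
      (AddMonoidAlgebra.mapDomainRingHom (ZMod p) (Int.castAddHom (ZMod (p ^ N))) f₁) ^ p ^ k =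
        (AddMonoidAlgebra.mapDomainRingHom (ZMod p)
            ((Int.castAddHom (ZMod (p ^ N))).comp (negAddMonoidHom : ℤ →+ ℤ)) f₂) ^ p ^ k) :
    f₁.coeff = Finsupp.mapDomain (fun n : ℤ => -n) f₂.coeff := by
  classical
  haveI : Fact p.Prime := ⟨hp⟩
  haveI : CharP (LaurentPolynomial (ZMod p)) p := charP_of_injective_algebraMap' (ZMod p) (A := LaurentPolynomial (ZMod p)) p
  set g₂ : LaurentPolynomial (ZMod p) := AddMonoidAlgebra.ofCoeff (Finsupp.mapDomain (fun n : ℤ => -n) f₂.coeff) with hg₂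
  have hg₂supp : ∀ n ∈ g₂.coeff.support, n.natAbs ≤ s := by
    intro n hn
    obtain ⟨m, hm, rfl⟩ := Finset.mem_image.1 (Finsupp.mapDomain_support hn)
    simpa using hf₂ m hm
  have hcomp : (AddMonoidAlgebra.mapDomainRingHom (ZMod p)
        ((Int.castAddHom (ZMod (p ^ N))).comp (negAddMonoidHom : ℤ →+ ℤ)) f₂)
      = AddMonoidAlgebra.mapDomainRingHom (ZMod p) (Int.castAddHom (ZMod (p ^ N))) g₂ := by
    show AddMonoidAlgebra.ofCoeff (Finsupp.mapDomain _ f₂.coeff)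
        = AddMonoidAlgebra.ofCoeff (Finsupp.mapDomain (⇑(Int.castAddHom (ZMod (p ^ N)))) (Finsupp.mapDomain _ f₂.coeff))
    rw [← Finsupp.mapDomain_comp]
    rfl
  rw [hcomp, ← map_pow, ← map_pow] at heq
  have hsub : (AddMonoidAlgebra.mapDomainRingHom (ZMod p) (Int.castAddHom (ZMod (p ^ N))))
      ((f₁ - g₂) ^ p ^ k) = 0 := by
    rw [sub_pow_char_pow, map_sub, heq, sub_self]
  set h := f₁ - g₂ with hh
  have hsupp : ∀ n ∈ h.coeff.support, n.natAbs ≤ s := by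
    intro n hn
    rcases Finset.mem_union.1 (Finsupp.support_sub (f := f₁.coeff) (g := g₂.coeff) hn) with h1 | h1
    · exact hf₁ n h1
    · exact hg₂supp n h1
  have hpow : ∀ n ∈ (h ^ p ^ k).coeff.support, n.natAbs ≤ p ^ k * s :=
    support_pow_natAbs_bound s h hsupp (p ^ k)
  have hinj : Set.InjOn (⇑(Int.castAddHom (ZMod (p ^ N))))
      {n : ℤ | n.natAbs ≤ p ^ k * s} := by
    intro a ha b hb hab
    have hdvd : ((p ^ N : ℕ) : ℤ) ∣ b - a := by
      have : (a : ZMod (p ^ N)) = (b : ZMod (p ^ N)) := hab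
      exact Int.ModEq.dvd ((ZMod.intCast_eq_intCast_iff _ _ _).1 this)
    have habs : (b - a).natAbs < p ^ N := by
      have h1 : (b - a).natAbs ≤ b.natAbs + a.natAbs := Int.natAbs_sub_le b a
      have ha' : a.natAbs ≤ p ^ k * s := ha
      have hb' : b.natAbs ≤ p ^ k * s := hb
      have : 2 * s * p ^ k = p ^ k * s + p ^ k * s := by ring
      omega
    have : b - a = 0 := by
      apply Int.eq_zero_of_abs_lt_dvd hdvd
      rw [Int.abs_eq_natAbs]
      exact_mod_cast habs
    linarith [sub_eq_zero.1 this]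
  have h0 : h ^ p ^ k = 0 := by
    apply AddMonoidAlgebra.coeff_injective
    apply Finsupp.mapDomain_injOn {n : ℤ | n.natAbs ≤ p ^ k * s} hinj
    · intro n hn
      exact hpow n hn
    · intro n hn
      simp at hn
    · have : Finsupp.mapDomain (⇑(Int.castAddHom (ZMod (p ^ N)))) (h ^ p ^ k).coeff
          = ((AddMonoidAlgebra.mapDomainRingHom (ZMod p) (Int.castAddHom (ZMod (p ^ N))))
            (h ^ p ^ k)).coeff := rfl
      rw [this, hsub]
      exact (Finsupp.mapDomain_zero).symm
  have hz : h = 0 := pow_eq_zero_iff (pow_ne_zero k hp.ne_zero) |>.1 h0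
  have := sub_eq_zero.1 hz
  exact congrArg AddMonoidAlgebra.coeff this
end

section
/- Let p be a prime and let f ∈ 𝔽_p[x] be squarefree (a unit multiple of a product of pairwise distinct monic irreducible polynomials) with f(0) ≠ 0, f(1) ≠ 0, and deg f = δ ≥ 1. Then for every ℓ ≥ 0 there exists N₀ such that for all N ≥ N₀ (with L = p^N): every W ∈ R that is consistently ℓ-local under t_f satisfies u^{p^k}·W = W for every integer k ≥ 0 with p^k > ℓ/δ. (Locality enforces that consistently local twist phases are p^k-translation invariant.) -/
open Polynomial
set_option linter.unusedSectionVars false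

noncomputable section

namespace S14

open AddMonoidAlgebra Finsupp Polynomial UniqueFactorizationMonoid

/-! ### Generic lemmas -/

section Aug

variable (C : Type*) (G : Type*) [CommSemiring C] [AddCommMonoid G]

/-- The augmentation (sum of coefficients) ring homomorphism. -/
noncomputable def aug : AddMonoidAlgebra C G →+* C :=
  ((AddMonoidAlgebra.lift C C G) 1).toRingHom

variable {C G}

@[simp] lemma aug_single (g : G) (c : C) : aug C G (AddMonoidAlgebra.single g c) = c := by
  simp [aug, AddMonoidAlgebra.lift_single]

end Aug

lemma isUnit_of_pow_isUnit {M : Type*} [CommMonoid M] {x : M} {n : ℕ} (h : IsUnit (x ^ n))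
    (hn : n ≠ 0) : IsUnit x := by
  obtain ⟨y, hy⟩ := h.exists_right_inv
  refine IsUnit.of_mul_eq_one (a := x) (x ^ (n - 1) * y) ?_
  have hs : n - 1 + 1 = n := Nat.succ_pred_eq_of_pos (Nat.pos_of_ne_zero hn)
  rw [← mul_assoc, ← pow_succ', hs]
  exact hy

instance charP_AMA {C : Type*} [Semiring C] {q : ℕ} [CharP C q] {G : Type*} [AddMonoid G] :
    CharP (AddMonoidAlgebra C G) q := by
  refine ⟨fun n => ?_⟩
  have h : ((n : ℕ) : AddMonoidAlgebra C G) = AddMonoidAlgebra.single (0 : G) ((n : ℕ) : C) := by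
    rw [← map_natCast (AddMonoidAlgebra.singleZeroRingHom (R := C) (M := G)) n]
    rfl
  rw [h, AddMonoidAlgebra.single_eq_zero, CharP.cast_eq_zero_iff C q n]


section CharPStuff

variable {p : ℕ} [Fact p.Prime]

variable {C : Type*} [CommRing C] [CharP C p] {G : Type*} [AddCommMonoid G]

lemma pow_char_pow_eq {n : ℕ} (hG : ∀ g : G, p ^ n • g = 0) (x : AddMonoidAlgebra C G) :
    x ^ p ^ n = AddMonoidAlgebra.single (0 : G) (aug C G x ^ p ^ n) := by
  have h1 : aug C G x = ∑ g ∈ x.coeff.support, x.coeff g := by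
    simp [aug, AddMonoidAlgebra.lift_apply, Finsupp.sum]
  conv_lhs => rw [← AddMonoidAlgebra.sum_coeff_single x]
  rw [Finsupp.sum, sum_pow_char_pow, h1, sum_pow_char_pow]
  calc ∑ g ∈ x.coeff.support, AddMonoidAlgebra.single g (x.coeff g) ^ p ^ n
      = ∑ g ∈ x.coeff.support, AddMonoidAlgebra.single (0 : G) (x.coeff g ^ p ^ n) := by
        refine Finset.sum_congr rfl fun g _ => ?_
        rw [AddMonoidAlgebra.single_pow, hG g]
    _ = AddMonoidAlgebra.single (0 : G) (∑ g ∈ x.coeff.support, x.coeff g ^ p ^ n) := by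
        exact (map_sum (AddMonoidAlgebra.singleAddHom (0 : G)) _ _).symm

lemma isUnit_of_aug_ne_zero {F : Type*} [Field F] [CharP F p] {n : ℕ}
    (hG : ∀ g : G, p ^ n • g = 0) (x : AddMonoidAlgebra F G) (hx : aug F G x ≠ 0) : IsUnit x := by
  refine isUnit_of_pow_isUnit (n := p ^ n) ?_ (pow_ne_zero n (Fact.out : p.Prime).ne_zero)
  rw [pow_char_pow_eq hG]
  refine IsUnit.of_mul_eq_one (AddMonoidAlgebra.single 0 ((aug F G x ^ p ^ n)⁻¹)) ?_
  rw [AddMonoidAlgebra.single_mul_single, add_zero, mul_inv_cancel₀ (pow_ne_zero _ hx)]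
  exact (AddMonoidAlgebra.one_def).symm

lemma aeval_pow_char_pow {S : Type*} [CommRing S] [Algebra (ZMod p) S] [CharP S p] (k : ℕ) (g : (ZMod p)[X]) (x : S) :
    aeval x g ^ p ^ k = aeval (x ^ p ^ k) g := by
  induction g using Polynomial.induction_on' with
  | add a b ha hb => rw [map_add, add_pow_char_pow, ha, hb, map_add]
  | monomial m c =>
    rw [aeval_monomial, aeval_monomial, mul_pow, ← map_pow, ZMod.pow_card_pow,
      ← pow_mul, ← pow_mul, mul_comm m (p ^ k)]

end CharPStuff

/-! ### The coefficient ring `B` and the polynomial presentation of `R` -/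

section Main

variable (p : ℕ) [Fact p.Prime] (L : ℕ) [NeZero L]

abbrev BB := AddMonoidAlgebra (ZMod p) (ZMod L)

def ubar : BB p L := AddMonoidAlgebra.single 1 1

noncomputable def iota : BB p L →+* R p L :=
  AddMonoidAlgebra.mapDomainRingHom (ZMod p) (AddMonoidHom.inl (ZMod L) (ZMod L))

lemma iota_single (a : ZMod L) (c : ZMod p) :
    iota p L (AddMonoidAlgebra.single a c) = AddMonoidAlgebra.single (a, (0 : ZMod L)) c := by
  simp [iota, Finsupp.mapDomain_single]

lemma iota_ubar : iota p L (ubar p L) = uu p L := by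
  rw [ubar, iota_single]; rfl

noncomputable instance algBR : Algebra (BB p L) (R p L) := (iota p L).toAlgebra

lemma algebraMap_BR_eq : algebraMap (BB p L) (R p L) = iota p L := rfl

lemma algebraMap_K0B (c : ZMod p) :
    algebraMap (ZMod p) (BB p L) c = AddMonoidAlgebra.single (0 : ZMod L) c := by
  simp [AddMonoidAlgebra.coe_algebraMap]

lemma algebraMap_K0R (c : ZMod p) :
    algebraMap (ZMod p) (R p L) c = AddMonoidAlgebra.single ((0 : ZMod L), (0 : ZMod L)) c := by
  simp [AddMonoidAlgebra.coe_algebraMap]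
  rfl

instance : IsScalarTower (ZMod p) (BB p L) (R p L) :=
  IsScalarTower.of_algebraMap_eq fun c => by
    show algebraMap (ZMod p) (R p L) c = iota p L (algebraMap (ZMod p) (BB p L) c)
    rw [algebraMap_K0R, algebraMap_K0B, iota_single]

lemma vv_pow (n : ℕ) :
    vv p L ^ n = AddMonoidAlgebra.single ((0 : ZMod L), (n : ZMod L)) 1 := by
  rw [vv, AddMonoidAlgebra.single_pow, one_pow]
  congr 1
  simp [Prod.ext_iff, nsmul_eq_mul]

lemma uv_pow (n : ℕ) :
    (uu p L * vv p L) ^ n = AddMonoidAlgebra.single (((n : ZMod L)), (n : ZMod L)) 1 := by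
  rw [uu, vv, AddMonoidAlgebra.single_mul_single, AddMonoidAlgebra.single_pow, one_mul, one_pow]
  congr 1
  simp [Prod.ext_iff, nsmul_eq_mul]

/-- The polynomial presentation map `B[X] → R`, `X ↦ v`. -/
noncomputable def pit : Polynomial (BB p L) →ₐ[BB p L] R p L := Polynomial.aeval (vv p L)

lemma pit_C (b : BB p L) : pit p L (Polynomial.C b) = iota p L b := by
  rw [pit, aeval_C, algebraMap_BR_eq]

lemma pit_monomial (n : ℕ) (b : BB p L) :
    pit p L (Polynomial.monomial n b) = iota p L b * vv p L ^ n := by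
  rw [pit, aeval_monomial, algebraMap_BR_eq]

lemma iota_mul_vv_pow (b : BB p L) (n : ℕ) :
    iota p L b * vv p L ^ n = AddMonoidAlgebra.mapDomain (fun i : ZMod L => (i, (n : ZMod L))) b := by
  induction b using AddMonoidAlgebra.induction_linear with
  | zero => simp
  | add f g hf hg => rw [map_add, add_mul, hf, hg, AddMonoidAlgebra.mapDomain_add]
  | single a c =>
      rw [iota_single, vv_pow, AddMonoidAlgebra.single_mul_single, mul_one,
        AddMonoidAlgebra.mapDomain_single]
      congr 1
      simp

/-- Canonical polynomial lift of an element of `R`. -/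
noncomputable def slicePoly (W : R p L) : Polynomial (BB p L) :=
  W.coeff.sum fun a c => Polynomial.monomial a.2.val (AddMonoidAlgebra.single a.1 c)

lemma pit_slicePoly (W : R p L) : pit p L (slicePoly p L W) = W := by
  rw [slicePoly, Finsupp.sum, map_sum]
  conv_rhs => rw [← AddMonoidAlgebra.sum_coeff_single W, Finsupp.sum]
  refine Finset.sum_congr rfl fun a _ => ?_
  rw [pit_monomial, iota_single, vv_pow, AddMonoidAlgebra.single_mul_single, mul_one]
  congr 1
  have hval : ((a.2.val : ℕ) : ZMod L) = a.2 := ZMod.natCast_rightInverse a.2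
  simp [Prod.ext_iff, hval]

lemma natDegree_slicePoly_le (W : R p L) : (slicePoly p L W).natDegree ≤ degV W := by
  rw [slicePoly, Finsupp.sum, degV]
  refine Polynomial.natDegree_sum_le_of_forall_le _ _ fun a ha => ?_
  exact (Polynomial.natDegree_monomial_le _).trans
    (Finset.le_sup (f := fun a : ZMod L × ZMod L => a.2.val) ha)

lemma pit_apply_of_natDegree_lt {g : Polynomial (BB p L)} (hg : g.natDegree < L)
    (a : ZMod L × ZMod L) : (pit p L g).coeff a = (g.coeff a.2.val).coeff a.1 := by
  have h1 : pit p L g = ∑ n ∈ Finset.range L, iota p L (g.coeff n) * vv p L ^ n := by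
    rw [pit, Polynomial.aeval_eq_sum_range' hg]
    exact Finset.sum_congr rfl fun n _ => by rw [Algebra.smul_def, algebraMap_BR_eq]
  have hterm : ∀ n ∈ Finset.range L,
      (iota p L (g.coeff n) * vv p L ^ n).coeff a = if n = a.2.val then (g.coeff n).coeff a.1 else 0 := by
    intro n hn
    rw [iota_mul_vv_pow]
    by_cases h : (n : ZMod L) = a.2
    · have hmem : a = ((fun i : ZMod L => (i, (n : ZMod L))) a.1) := by
        simp [Prod.ext_iff, h]
      have inj : Function.Injective (fun i : ZMod L => (i, (n : ZMod L))) :=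
        fun x y hxy => (Prod.ext_iff.mp hxy).1
      have hnv : n = a.2.val := by
        rw [← h, ZMod.val_cast_of_lt (Finset.mem_range.mp hn)]
      conv_lhs => rw [hmem]
      rw [AddMonoidAlgebra.coeff_mapDomain, Finsupp.mapDomain_apply inj, if_pos hnv]
    · rw [AddMonoidAlgebra.coeff_mapDomain, Finsupp.mapDomain_notin_range, if_neg]
      · intro hna
        exact h (by rw [hna, ZMod.natCast_rightInverse a.2])
      · rintro ⟨i, hi⟩
        exact h (congrArg Prod.snd hi)
  rw [h1, AddMonoidAlgebra.coeff_sum, Finsupp.finset_sum_apply, Finset.sum_congr rfl hterm,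
    Finset.sum_ite_eq' (Finset.range L) a.2.val (fun n => (g.coeff n).coeff a.1),
    if_pos (Finset.mem_range.mpr (ZMod.val_lt a.2))]

lemma pit_inj {g₁ g₂ : Polynomial (BB p L)} (h₁ : g₁.natDegree < L) (h₂ : g₂.natDegree < L)
    (h : pit p L g₁ = pit p L g₂) : g₁ = g₂ := by
  apply Polynomial.ext; intro n
  rcases lt_or_ge n L with hn | hn
  · apply AddMonoidAlgebra.ext; apply Finsupp.ext; intro i
    have hv : ((n : ZMod L)).val = n := ZMod.val_cast_of_lt hn
    have e : (g₁.coeff ((n : ZMod L)).val).coeff i = (g₂.coeff ((n : ZMod L)).val).coeff i := by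
      rw [← pit_apply_of_natDegree_lt p L h₁ (i, (n : ZMod L)), h,
        pit_apply_of_natDegree_lt p L h₂]
    rwa [hv] at e
  · rw [Polynomial.coeff_eq_zero_of_natDegree_lt (lt_of_lt_of_le h₁ hn),
      Polynomial.coeff_eq_zero_of_natDegree_lt (lt_of_lt_of_le h₂ hn)]

end Main

/-! ### Residue extraction on polynomials -/

section Sect

variable {C : Type*} [CommRing C]

noncomputable def sect (Q r : ℕ) (g : Polynomial C) : Polynomial C :=
  ∑ j ∈ Finset.range (g.natDegree + 1), Polynomial.monomial j (g.coeff (Q * j + r))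

lemma coeff_sect (Q r : ℕ) (hQ : 0 < Q) (g : Polynomial C) (j : ℕ) :
    (sect Q r g).coeff j = g.coeff (Q * j + r) := by
  rw [sect, Polynomial.finset_sum_coeff]
  simp_rw [Polynomial.coeff_monomial]
  rcases le_or_gt j g.natDegree with hj | hj
  · rw [Finset.sum_ite_eq' (Finset.range (g.natDegree + 1)) j
      (fun j' => g.coeff (Q * j' + r)),
      if_pos (Finset.mem_range.mpr (Nat.lt_succ_of_le hj))]
  · rw [Finset.sum_eq_zero, eq_comm]
    · apply Polynomial.coeff_eq_zero_of_natDegree_lt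
      calc g.natDegree < j := hj
        _ ≤ Q * j := Nat.le_mul_of_pos_left j hQ
        _ ≤ Q * j + r := Nat.le_add_right _ _
    · intro j' hj'
      rw [if_neg]
      intro hjj
      rw [hjj] at hj'
      exact absurd (Finset.mem_range.mp hj') (not_lt.mpr hj)

lemma sect_expand_mul (Q r : ℕ) (hQ : 0 < Q) (hr : r < Q) (a g : Polynomial C) :
    sect Q r (Polynomial.expand C Q a * g) = a * sect Q r g := by
  apply Polynomial.ext; intro j
  rw [coeff_sect Q r hQ]
  induction a using Polynomial.induction_on' with
  | add u v hu hv =>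
      rw [map_add, add_mul, add_mul, Polynomial.coeff_add, Polynomial.coeff_add, hu, hv]
  | monomial n c =>
      rw [Polynomial.expand_monomial, ← Polynomial.C_mul_X_pow_eq_monomial,
        ← Polynomial.C_mul_X_pow_eq_monomial, mul_assoc, mul_assoc,
        Polynomial.coeff_C_mul, Polynomial.coeff_C_mul,
        mul_comm (Polynomial.X ^ (n * Q)) g, mul_comm (Polynomial.X ^ n) (sect Q r g),
        Polynomial.coeff_mul_X_pow', Polynomial.coeff_mul_X_pow']
      rcases le_or_gt n j with h | h
      · have hle : n * Q ≤ Q * j + r := by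
          calc n * Q = Q * n := mul_comm _ _
            _ ≤ Q * j := Nat.mul_le_mul_left _ h
            _ ≤ Q * j + r := Nat.le_add_right _ _
        rw [if_pos hle, if_pos h, coeff_sect Q r hQ]
        congr 1
        obtain ⟨m, rfl⟩ := Nat.exists_eq_add_of_le h
        have h1 : Q * (n + m) + r = n * Q + (Q * m + r) := by ring
        rw [h1, Nat.add_sub_cancel_left, Nat.add_sub_cancel_left]
      · have hlt : ¬ n * Q ≤ Q * j + r := by
          push_neg
          calc Q * j + r < Q * j + Q := by omega
            _ = Q * (j + 1) := by ring
            _ ≤ Q * n := Nat.mul_le_mul_left _ h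
            _ = n * Q := mul_comm _ _
        rw [if_neg hlt, if_neg (not_le.mpr h)]

end Sect

/-! ### The polynomials `fB`, `fu`, `Hx` -/

section FPoly

variable (p : ℕ) [Fact p.Prime] (L : ℕ) [NeZero L]
variable (f : (ZMod p)[X]) (Q : ℕ)

noncomputable def fB : Polynomial (BB p L) := f.map (algebraMap (ZMod p) (BB p L))

noncomputable def cB : BB p L := ubar p L ^ Q

noncomputable def fu : Polynomial (BB p L) :=
  ∑ j ∈ Finset.range (f.natDegree + 1), Polynomial.monomial j (f.coeff j • cB p L Q ^ j)

noncomputable def Hx : Polynomial (BB p L) :=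
  ∑ j ∈ Finset.range (f.natDegree + 1),
    Polynomial.monomial j (f.coeff j • ∑ t ∈ Finset.range j, cB p L Q ^ t)

noncomputable def epsB : BB p L := cB p L Q - 1

lemma coeff_rangesum (F : ℕ → BB p L) (d j : ℕ) (hd : ∀ m, d < m → F m = 0) :
    (∑ j' ∈ Finset.range (d + 1), Polynomial.monomial j' (F j')).coeff j = F j := by
  rw [Polynomial.finset_sum_coeff]
  simp_rw [Polynomial.coeff_monomial]
  rcases le_or_gt j d with hj | hj
  · rw [Finset.sum_ite_eq' (Finset.range (d + 1)) j F,
      if_pos (Finset.mem_range.mpr (Nat.lt_succ_of_le hj))]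
  · rw [Finset.sum_eq_zero, eq_comm]
    · exact hd j hj
    · intro j' hj'
      rw [if_neg]
      intro hjj
      rw [hjj] at hj'
      exact absurd (Finset.mem_range.mp hj') (not_lt.mpr hj)

lemma coeff_fu (j : ℕ) : (fu p L f Q).coeff j = f.coeff j • cB p L Q ^ j := by
  rw [fu]
  exact coeff_rangesum p L _ _ _ fun m hm => by
    rw [Polynomial.coeff_eq_zero_of_natDegree_lt hm, zero_smul]

lemma coeff_Hx (j : ℕ) :
    (Hx p L f Q).coeff j = f.coeff j • ∑ t ∈ Finset.range j, cB p L Q ^ t := by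
  rw [Hx]
  exact coeff_rangesum p L _ _ _ fun m hm => by
    rw [Polynomial.coeff_eq_zero_of_natDegree_lt hm, zero_smul]

lemma coeff_fB (j : ℕ) : (fB p L f).coeff j = algebraMap (ZMod p) (BB p L) (f.coeff j) :=
  Polynomial.coeff_map _ _

lemma fu_eq : fu p L f Q = fB p L f + Polynomial.C (epsB p L Q) * Hx p L f Q := by
  apply Polynomial.ext; intro j
  rw [Polynomial.coeff_add, coeff_fB, Polynomial.coeff_C_mul, coeff_fu, coeff_Hx, epsB,
    mul_smul_comm, mul_comm, geom_sum_mul, Algebra.algebraMap_eq_smul_one, ← smul_add]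
  congr 1
  ring

lemma natDegree_fu_le : (fu p L f Q).natDegree ≤ f.natDegree := by
  rw [fu]
  exact Polynomial.natDegree_sum_le_of_forall_le _ _ fun j hj =>
    (Polynomial.natDegree_monomial_le _).trans (Nat.lt_succ_iff.mp (Finset.mem_range.mp hj))

lemma natDegree_fB_le : (fB p L f).natDegree ≤ f.natDegree := by
  rw [fB]; exact Polynomial.natDegree_map_le

lemma pit_expand_fB : pit p L (Polynomial.expand _ Q (fB p L f)) = aeval (vv p L ^ Q) f := by
  rw [pit, Polynomial.expand_aeval, fB, Polynomial.aeval_map_algebraMap]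

lemma pit_expand_fu :
    pit p L (Polynomial.expand _ Q (fu p L f Q)) = aeval ((uu p L * vv p L) ^ Q) f := by
  rw [pit, Polynomial.expand_aeval, fu, map_sum,
    Polynomial.aeval_eq_sum_range (R := ZMod p) (p := f) ((uu p L * vv p L) ^ Q)]
  refine Finset.sum_congr rfl fun j hj => ?_
  rw [Polynomial.aeval_monomial]
  have h1 : algebraMap (BB p L) (R p L) ((f.coeff j) • cB p L Q ^ j)
      = algebraMap (ZMod p) (R p L) (f.coeff j) * (uu p L ^ Q) ^ j := by
    rw [Algebra.smul_def, map_mul, ← IsScalarTower.algebraMap_apply, map_pow, cB, map_pow,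
      algebraMap_BR_eq, iota_ubar]
  rw [h1, Algebra.smul_def, mul_assoc]
  congr 1
  rw [mul_pow, mul_pow]

lemma iota_epsB : iota p L (epsB p L Q) = uu p L ^ Q - 1 := by
  rw [epsB, map_sub, map_one, cB, map_pow, iota_ubar]

end FPoly

/-! ### Reduction modulo an irreducible factor -/

section Factor

variable (p : ℕ) [Fact p.Prime] (L : ℕ) [NeZero L]
variable (fi : (ZMod p)[X])

abbrev Di := AddMonoidAlgebra (AdjoinRoot fi) (ZMod L)

noncomputable def PhiHom : BB p L →+* Di p L fi :=
  ((AddMonoidAlgebra.lift (ZMod p) (Di p L fi) (ZMod L))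
    { toFun := fun g => AddMonoidAlgebra.single g.toAdd 1
      map_one' := (AddMonoidAlgebra.one_def).symm
      map_mul' := fun x y => by
        rw [AddMonoidAlgebra.single_mul_single, mul_one]
        rfl }).toRingHom

lemma PhiHom_single (g : ZMod L) (c : ZMod p) :
    PhiHom p L fi (AddMonoidAlgebra.single g c)
      = AddMonoidAlgebra.single g (algebraMap (ZMod p) (AdjoinRoot fi) c) := by
  rw [PhiHom]
  show (AddMonoidAlgebra.lift (ZMod p) (Di p L fi) (ZMod L)) _ (AddMonoidAlgebra.single g c) = _
  rw [AddMonoidAlgebra.lift_single]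
  show c • AddMonoidAlgebra.single g (1 : AdjoinRoot fi) = _
  rw [AddMonoidAlgebra.smul_single, Algebra.smul_def, mul_one]

noncomputable def rho : Polynomial (BB p L) →+* Di p L fi :=
  Polynomial.eval₂RingHom (PhiHom p L fi) (AddMonoidAlgebra.single 0 (AdjoinRoot.root fi))

lemma rho_C (b : BB p L) : rho p L fi (Polynomial.C b) = PhiHom p L fi b := by
  rw [rho, Polynomial.coe_eval₂RingHom, Polynomial.eval₂_C]

lemma rho_map (q : (ZMod p)[X]) :
    rho p L fi (q.map (algebraMap (ZMod p) (BB p L)))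
      = AddMonoidAlgebra.single 0 (AdjoinRoot.mk fi q) := by
  induction q using Polynomial.induction_on' with
  | add u v hu hv =>
      rw [Polynomial.map_add, map_add, hu, hv, map_add]
      exact (AddMonoidAlgebra.single_add _ _ _).symm
  | monomial n c =>
      rw [Polynomial.map_monomial, rho, Polynomial.coe_eval₂RingHom, Polynomial.eval₂_monomial,
        algebraMap_K0B, PhiHom_single, AddMonoidAlgebra.single_pow,
        AddMonoidAlgebra.single_mul_single, ← AdjoinRoot.aeval_eq, Polynomial.aeval_monomial]
      congr 1
      simp

lemma aug_PhiHom (b : BB p L) :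
    aug (AdjoinRoot fi) (ZMod L) (PhiHom p L fi b)
      = algebraMap (ZMod p) (AdjoinRoot fi) (aug (ZMod p) (ZMod L) b) := by
  induction b using AddMonoidAlgebra.induction_linear with
  | zero => simp
  | add x y hx hy => rw [map_add, map_add, hx, hy, map_add, map_add]
  | single g c => rw [PhiHom_single, aug_single, aug_single]

lemma PhiHom_apply (b : BB p L) (m : ZMod L) :
    (PhiHom p L fi b).coeff m = algebraMap (ZMod p) (AdjoinRoot fi) (b.coeff m) := by
  induction b using AddMonoidAlgebra.induction_linear with
  | zero => simp
  | add x y hx hy => rw [map_add, AddMonoidAlgebra.coeff_add, AddMonoidAlgebra.coeff_add, Finsupp.add_apply, Finsupp.add_apply, hx, hy, map_add]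
  | single g c =>
      rw [PhiHom_single, AddMonoidAlgebra.coeff_single, AddMonoidAlgebra.coeff_single, Finsupp.single_apply, Finsupp.single_apply,
        apply_ite (algebraMap (ZMod p) (AdjoinRoot fi)), map_zero]

noncomputable def tsl (g : Polynomial (BB p L)) (m : ZMod L) : (ZMod p)[X] :=
  ∑ j ∈ Finset.range (g.natDegree + 1), Polynomial.monomial j ((g.coeff j).coeff m)

lemma natDegree_tsl_le (g : Polynomial (BB p L)) (m : ZMod L) :
    (tsl p L g m).natDegree ≤ g.natDegree := by
  rw [tsl]
  exact Polynomial.natDegree_sum_le_of_forall_le _ _ fun j hj =>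
    (Polynomial.natDegree_monomial_le _).trans (Nat.lt_succ_iff.mp (Finset.mem_range.mp hj))

lemma coeff_tsl (g : Polynomial (BB p L)) (m : ZMod L) (j : ℕ) :
    (tsl p L g m).coeff j = (g.coeff j).coeff m := by
  rw [tsl, Polynomial.finset_sum_coeff]
  simp_rw [Polynomial.coeff_monomial]
  rcases le_or_gt j g.natDegree with hj | hj
  · rw [Finset.sum_ite_eq' (Finset.range (g.natDegree + 1)) j (fun j' => (g.coeff j').coeff m),
      if_pos (Finset.mem_range.mpr (Nat.lt_succ_of_le hj))]
  · rw [Finset.sum_eq_zero, eq_comm]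
    · rw [Polynomial.coeff_eq_zero_of_natDegree_lt hj]
      rfl
    · intro j' hj'
      rw [if_neg]
      intro hjj
      rw [hjj] at hj'
      exact absurd (Finset.mem_range.mp hj') (not_lt.mpr hj)

lemma eq_zero_of_tsl (g : Polynomial (BB p L)) (h : ∀ m : ZMod L, tsl p L g m = 0) : g = 0 := by
  apply Polynomial.ext; intro j
  apply AddMonoidAlgebra.ext; apply Finsupp.ext; intro m
  have := congrArg (fun q => Polynomial.coeff q j) (h m)
  simp only [Polynomial.coeff_zero] at this
  rw [coeff_tsl] at this
  rw [this]
  rfl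

lemma rho_apply_eq_aeval_tsl (g : Polynomial (BB p L)) (m : ZMod L) :
    (rho p L fi g).coeff m = aeval (AdjoinRoot.root fi) (tsl p L g m) := by
  have h1 : rho p L fi g = ∑ j ∈ Finset.range (g.natDegree + 1),
      PhiHom p L fi (g.coeff j) * AddMonoidAlgebra.single 0 (AdjoinRoot.root fi ^ j) := by
    rw [rho, Polynomial.coe_eval₂RingHom,
      Polynomial.eval₂_eq_sum_range' _ (Nat.lt_succ_self _)]
    refine Finset.sum_congr rfl fun j _ => ?_
    rw [AddMonoidAlgebra.single_pow, smul_zero]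
  rw [h1, AddMonoidAlgebra.coeff_sum, Finsupp.finset_sum_apply, tsl, map_sum]
  refine Finset.sum_congr rfl fun j _ => ?_
  rw [AddMonoidAlgebra.coeff_mul_single_zero, PhiHom_apply, Polynomial.aeval_monomial]

lemma fi_dvd_tsl_of_rho_eq_zero {g : Polynomial (BB p L)} (hg : rho p L fi g = 0) (m : ZMod L) :
    fi ∣ tsl p L g m := by
  rw [← AdjoinRoot.mk_eq_zero, ← AdjoinRoot.aeval_eq, ← rho_apply_eq_aeval_tsl, hg]
  rfl

lemma aug_rho_Hx (f : (ZMod p)[X]) (hd1 : 1 ≤ f.natDegree) (Q : ℕ) :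
    aug (AdjoinRoot fi) (ZMod L) (rho p L fi (Hx p L f Q))
      = AdjoinRoot.root fi * aeval (AdjoinRoot.root fi) (Polynomial.derivative f) := by
  have hXd : (Polynomial.X * Polynomial.derivative f).natDegree < f.natDegree + 1 := by
    apply Nat.lt_succ_of_le
    calc (Polynomial.X * Polynomial.derivative f).natDegree
        ≤ 1 + (Polynomial.derivative f).natDegree := Polynomial.natDegree_mul_le.trans
          (by rw [Polynomial.natDegree_X])
      _ ≤ 1 + (f.natDegree - 1) := Nat.add_le_add_left (Polynomial.natDegree_derivative_le f) 1
      _ ≤ f.natDegree := by omega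
  have hRHS : AdjoinRoot.root fi * aeval (AdjoinRoot.root fi) (Polynomial.derivative f)
      = ∑ j ∈ Finset.range (f.natDegree + 1),
          algebraMap (ZMod p) (AdjoinRoot fi) ((Polynomial.X * Polynomial.derivative f).coeff j)
            * AdjoinRoot.root fi ^ j := by
    rw [show AdjoinRoot.root fi * aeval (AdjoinRoot.root fi) (Polynomial.derivative f)
        = aeval (AdjoinRoot.root fi) (Polynomial.X * Polynomial.derivative f) by
          rw [map_mul, aeval_X]]
    rw [Polynomial.aeval_eq_sum_range' hXd]
    exact Finset.sum_congr rfl fun j _ => by rw [Algebra.smul_def]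
  rw [hRHS, Hx, map_sum, map_sum]
  refine Finset.sum_congr rfl fun j hj => ?_
  rw [rho, Polynomial.coe_eval₂RingHom, Polynomial.eval₂_monomial, map_mul, aug_PhiHom,
    AddMonoidAlgebra.single_pow, smul_zero, aug_single]
  congr 2
  have h1 : aug (ZMod p) (ZMod L) (f.coeff j • ∑ t ∈ Finset.range j, cB p L Q ^ t)
      = f.coeff j * (j : ZMod p) := by
    rw [Algebra.smul_def, map_mul]
    have haugalg : aug (ZMod p) (ZMod L) (algebraMap (ZMod p) (BB p L) (f.coeff j))
        = f.coeff j := by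
      rw [algebraMap_K0B, aug_single]
    rw [haugalg, map_sum]
    have hone : ∀ t ∈ Finset.range j, aug (ZMod p) (ZMod L) (cB p L Q ^ t) = 1 := by
      intro t _
      rw [map_pow, cB, map_pow, ubar, aug_single, one_pow, one_pow]
    rw [Finset.sum_congr rfl hone, Finset.sum_const, Finset.card_range, nsmul_eq_mul, mul_one]
  rw [h1]
  rcases j with _ | j
  · rw [Polynomial.mul_coeff_zero, Polynomial.coeff_X_zero, zero_mul, Nat.cast_zero, mul_zero]
  · rw [Polynomial.coeff_X_mul, Polynomial.coeff_derivative]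
    push_cast
    ring

end Factor

/-! ### Nonvanishing facts and factor combination -/

section NonVanish

variable {p : ℕ} [Fact p.Prime]

lemma root_ne_zero {f fi : (ZMod p)[X]} (hf0 : f.eval 0 ≠ 0) (hdvd : fi ∣ f)
    (hirr : Irreducible fi) : AdjoinRoot.root fi ≠ 0 := by
  intro h
  have hmkX : AdjoinRoot.mk fi Polynomial.X = 0 := by rw [AdjoinRoot.mk_X, h]
  have hfiX : fi ∣ Polynomial.X := AdjoinRoot.mk_eq_zero.mp hmkX
  obtain ⟨t, ht⟩ := hfiX
  have hu : IsUnit t := by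
    rcases (Polynomial.irreducible_X (R := ZMod p)).isUnit_or_isUnit ht with hu | hu
    · exact absurd hu hirr.not_isUnit
    · exact hu
  have hassoc : Associated fi Polynomial.X := ⟨hu.unit, by rw [IsUnit.unit_spec]; exact ht.symm⟩
  have hXf : Polynomial.X ∣ f := hassoc.symm.dvd.trans hdvd
  rw [Polynomial.X_dvd_iff, Polynomial.coeff_zero_eq_eval_zero] at hXf
  exact hf0 hXf

lemma deriv_root_ne_zero {f fi : (ZMod p)[X]} (hsf : Squarefree f) (hdvd : fi ∣ f)
    (hirr : Irreducible fi) :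
    aeval (AdjoinRoot.root fi) (Polynomial.derivative f) ≠ 0 := by
  haveI : Fact (Irreducible fi) := ⟨hirr⟩
  have hsep : f.Separable := (PerfectField.separable_iff_squarefree).mpr hsf
  obtain ⟨a, b, hab⟩ := hsep
  intro h
  have h0 : aeval (AdjoinRoot.root fi) f = 0 := by
    rw [AdjoinRoot.aeval_eq, AdjoinRoot.mk_eq_zero]
    exact hdvd
  have := congrArg (aeval (AdjoinRoot.root fi)) hab
  rw [map_add, map_mul, map_mul, h0, h, mul_zero, mul_zero, add_zero, map_one] at this
  exact zero_ne_one this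

lemma f_dvd_of_factors {f : (ZMod p)[X]} (hsf : Squarefree f) (hf : f ≠ 0) {q : (ZMod p)[X]}
    (h : ∀ fi ∈ (UniqueFactorizationMonoid.normalizedFactors f).toFinset, fi ∣ q) : f ∣ q := by
  have hnd : (UniqueFactorizationMonoid.normalizedFactors f).Nodup :=
    (UniqueFactorizationMonoid.squarefree_iff_nodup_normalizedFactors hf).mp hsf
  have hcp : Set.Pairwise
      (((UniqueFactorizationMonoid.normalizedFactors f).toFinset : Set (ZMod p)[X]))
      (Function.onFun IsCoprime (id : (ZMod p)[X] → (ZMod p)[X])) := by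
    intro a ha b hb hab
    have ha' : a ∈ UniqueFactorizationMonoid.normalizedFactors f := by
      exact Multiset.mem_toFinset.mp ha
    have hb' : b ∈ UniqueFactorizationMonoid.normalizedFactors f := by
      exact Multiset.mem_toFinset.mp hb
    have hairr := UniqueFactorizationMonoid.irreducible_of_normalized_factor a ha'
    have hbirr := UniqueFactorizationMonoid.irreducible_of_normalized_factor b hb'
    rcases hairr.isCoprime_or_dvd b with hc | hd
    · exact hc
    · exfalso
      apply hab
      have hassoc := hairr.associated_of_dvd hbirr hd
      have : normalize a = normalize b :=
        normalize_eq_normalize_iff.mpr ⟨hassoc.dvd, hassoc.symm.dvd⟩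
      rwa [UniqueFactorizationMonoid.normalize_normalized_factor a ha',
        UniqueFactorizationMonoid.normalize_normalized_factor b hb'] at this
  have hprod := Finset.prod_dvd_of_coprime hcp fun fi hfi => h fi hfi
  have heq : ∏ x ∈ (UniqueFactorizationMonoid.normalizedFactors f).toFinset, id x
      = (UniqueFactorizationMonoid.normalizedFactors f).prod := by
    rw [Finset.prod, Multiset.toFinset_val, Multiset.dedup_eq_self.mpr hnd]
    simp
  rw [heq] at hprod
  exact ((UniqueFactorizationMonoid.prod_normalizedFactors hf).symm.dvd).trans hprod

end NonVanish

/-! ### The core argument -/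

section Core

variable {p : ℕ} [Fact p.Prime]

lemma exponent_zmod (M : ℕ) (a : ZMod M) : M • a = 0 := by
  rw [nsmul_eq_mul, ZMod.natCast_self, zero_mul]

lemma core {f : (ZMod p)[X]} (hsf : Squarefree f) (hf0 : f.eval 0 ≠ 0)
    (hd1 : 1 ≤ f.natDegree) (N k ℓ : ℕ)
    (hbound : f.natDegree * p ^ k + ℓ < p ^ N)
    (hℓ : ℓ < f.natDegree * p ^ k)
    (W W₁ : R p (p ^ N))
    (hrel : aeval ((uu p (p ^ N) * vv p (p ^ N)) ^ p ^ k) f * W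
      = aeval (vv p (p ^ N) ^ p ^ k) f * W₁)
    (hW : degV W ≤ ℓ) (hW₁ : degV W₁ ≤ ℓ) :
    uu p (p ^ N) ^ p ^ k * W = W := by
  haveI : NeZero (p ^ N) := ⟨pow_ne_zero _ (Fact.out : p.Prime).ne_zero⟩
  have hQ : 0 < (p ^ k) := pow_pos (Fact.out : p.Prime).pos k
  have hf : f ≠ 0 := fun h => hf0 (by simp [h])
  set PP := slicePoly p (p ^ N) W with hPP
  set PP₁ := slicePoly p (p ^ N) W₁ with hPP₁
  have hPdeg : PP.natDegree ≤ ℓ := (natDegree_slicePoly_le p (p ^ N) W).trans hW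
  have hP₁deg : PP₁.natDegree ≤ ℓ := (natDegree_slicePoly_le p (p ^ N) W₁).trans hW₁
  have hEq : Polynomial.expand _ (p ^ k) (fu p (p ^ N) f (p ^ k)) * PP = Polynomial.expand _ (p ^ k) (fB p (p ^ N) f) * PP₁ := by
    apply pit_inj p (p ^ N)
    · calc (Polynomial.expand _ (p ^ k) (fu p (p ^ N) f (p ^ k)) * PP).natDegree
          ≤ (Polynomial.expand _ (p ^ k) (fu p (p ^ N) f (p ^ k))).natDegree + PP.natDegree :=
            Polynomial.natDegree_mul_le
        _ ≤ f.natDegree * (p ^ k) + ℓ := by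
            rw [Polynomial.natDegree_expand]
            exact add_le_add (Nat.mul_le_mul_right _ (natDegree_fu_le p (p ^ N) f (p ^ k))) hPdeg
        _ < (p ^ N) := hbound
    · calc (Polynomial.expand _ (p ^ k) (fB p (p ^ N) f) * PP₁).natDegree
          ≤ (Polynomial.expand _ (p ^ k) (fB p (p ^ N) f)).natDegree + PP₁.natDegree :=
            Polynomial.natDegree_mul_le
        _ ≤ f.natDegree * (p ^ k) + ℓ := by
            rw [Polynomial.natDegree_expand]
            exact add_le_add (Nat.mul_le_mul_right _ (natDegree_fB_le p (p ^ N) f)) hP₁deg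
        _ < (p ^ N) := hbound
    · rw [map_mul, map_mul, pit_expand_fu, pit_expand_fB, pit_slicePoly, pit_slicePoly]
      exact hrel
  have key : ∀ n : ℕ, epsB p (p ^ N) (p ^ k) * PP.coeff n = 0 := by
    intro n
    rcases le_or_gt n ℓ with hn | hn
    · have hrQ : (n % (p ^ k)) < (p ^ k) := Nat.mod_lt _ hQ
      have hn' : (p ^ k) * (n / (p ^ k)) + (n % (p ^ k)) = n := Nat.div_add_mod n (p ^ k)
      have hstar : fu p (p ^ N) f (p ^ k) * sect (p ^ k) (n % (p ^ k)) PP = fB p (p ^ N) f * sect (p ^ k) (n % (p ^ k)) PP₁ := by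
        rw [← sect_expand_mul (p ^ k) (n % (p ^ k)) hQ hrQ, ← sect_expand_mul (p ^ k) (n % (p ^ k)) hQ hrQ, hEq]
      have hPrdeg : (sect (p ^ k) (n % (p ^ k)) PP).natDegree ≤ f.natDegree - 1 := by
        apply Polynomial.natDegree_le_iff_coeff_eq_zero.mpr
        intro m hm
        rw [coeff_sect (p ^ k) (n % (p ^ k)) hQ]
        apply Polynomial.coeff_eq_zero_of_natDegree_lt
        have hfm : f.natDegree ≤ m := by omega
        calc PP.natDegree ≤ ℓ := hPdeg
          _ < f.natDegree * (p ^ k) := hℓ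
          _ ≤ m * (p ^ k) := Nat.mul_le_mul_right _ hfm
          _ = (p ^ k) * m := mul_comm _ _
          _ ≤ (p ^ k) * m + (n % (p ^ k)) := Nat.le_add_right _ _
      have hCPr : Polynomial.C (epsB p (p ^ N) (p ^ k)) * sect (p ^ k) (n % (p ^ k)) PP = 0 := by
        have hdvd : ∀ m : ZMod (p ^ N), f ∣ tsl p (p ^ N) (Polynomial.C (epsB p (p ^ N) (p ^ k)) * sect (p ^ k) (n % (p ^ k)) PP) m := by
          intro m
          apply f_dvd_of_factors hsf hf
          intro fi hfi
          have hfi' : fi ∈ UniqueFactorizationMonoid.normalizedFactors f := Multiset.mem_toFinset.mp hfi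
          have hirr := UniqueFactorizationMonoid.irreducible_of_normalized_factor fi hfi'
          have hdvdf := UniqueFactorizationMonoid.dvd_of_mem_normalizedFactors hfi'
          haveI : Fact (Irreducible fi) := ⟨hirr⟩
          haveI : CharP (AdjoinRoot fi) p :=
            charP_of_injective_algebraMap
              (algebraMap (ZMod p) (AdjoinRoot fi)).injective p
          apply fi_dvd_tsl_of_rho_eq_zero
          have hfB0 : rho p (p ^ N) fi (fB p (p ^ N) f) = 0 := by
            rw [fB, rho_map, AdjoinRoot.mk_eq_zero.mpr hdvdf]
            exact AddMonoidAlgebra.single_zero 0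
          have hfu : rho p (p ^ N) fi (fu p (p ^ N) f (p ^ k))
              = PhiHom p (p ^ N) fi (epsB p (p ^ N) (p ^ k)) * rho p (p ^ N) fi (Hx p (p ^ N) f (p ^ k)) := by
            rw [fu_eq, map_add, hfB0, zero_add, map_mul, rho_C]
          have h0 : PhiHom p (p ^ N) fi (epsB p (p ^ N) (p ^ k)) * rho p (p ^ N) fi (Hx p (p ^ N) f (p ^ k))
              * rho p (p ^ N) fi (sect (p ^ k) (n % (p ^ k)) PP) = 0 := by
            rw [← hfu, ← map_mul, hstar, map_mul, hfB0, zero_mul]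
          have hunit : IsUnit (rho p (p ^ N) fi (Hx p (p ^ N) f (p ^ k))) := by
            apply isUnit_of_aug_ne_zero (n := N)
              (fun g : ZMod (p ^ N) => exponent_zmod (p ^ N) g)
            rw [aug_rho_Hx p (p ^ N) fi f hd1 (p ^ k)]
            exact mul_ne_zero (root_ne_zero hf0 hdvdf hirr) (deriv_root_ne_zero hsf hdvdf hirr)
          obtain ⟨y, hy⟩ := hunit.exists_right_inv
          have hfinal : PhiHom p (p ^ N) fi (epsB p (p ^ N) (p ^ k)) * rho p (p ^ N) fi (sect (p ^ k) (n % (p ^ k)) PP) = 0 := by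
            have h2 : PhiHom p (p ^ N) fi (epsB p (p ^ N) (p ^ k)) * rho p (p ^ N) fi (sect (p ^ k) (n % (p ^ k)) PP)
                = PhiHom p (p ^ N) fi (epsB p (p ^ N) (p ^ k)) * rho p (p ^ N) fi (Hx p (p ^ N) f (p ^ k))
                  * rho p (p ^ N) fi (sect (p ^ k) (n % (p ^ k)) PP) * y := by
              rw [show PhiHom p (p ^ N) fi (epsB p (p ^ N) (p ^ k)) * rho p (p ^ N) fi (Hx p (p ^ N) f (p ^ k))
                    * rho p (p ^ N) fi (sect (p ^ k) (n % (p ^ k)) PP) * y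
                  = PhiHom p (p ^ N) fi (epsB p (p ^ N) (p ^ k)) * rho p (p ^ N) fi (sect (p ^ k) (n % (p ^ k)) PP)
                    * (rho p (p ^ N) fi (Hx p (p ^ N) f (p ^ k)) * y) from by ring, hy, mul_one]
            rw [h2, h0, zero_mul]
          rw [map_mul, rho_C]
          exact hfinal
        apply eq_zero_of_tsl
        intro m
        by_contra hne
        have hdeg := Polynomial.natDegree_le_of_dvd (hdvd m) hne
        have hle : (tsl p (p ^ N) (Polynomial.C (epsB p (p ^ N) (p ^ k)) * sect (p ^ k) (n % (p ^ k)) PP) m).natDegree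
            ≤ f.natDegree - 1 :=
          (natDegree_tsl_le p (p ^ N) _ m).trans
            ((Polynomial.natDegree_C_mul_le _ _).trans hPrdeg)
        omega
      have hc := congrArg (fun q => Polynomial.coeff q (n / (p ^ k))) hCPr
      simp only [Polynomial.coeff_C_mul, Polynomial.coeff_zero] at hc
      rw [coeff_sect (p ^ k) (n % (p ^ k)) hQ, hn'] at hc
      exact hc
    · rw [Polynomial.coeff_eq_zero_of_natDegree_lt (lt_of_le_of_lt hPdeg hn), mul_zero]
  have hCP : Polynomial.C (epsB p (p ^ N) (p ^ k)) * PP = 0 := by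
    apply Polynomial.ext
    intro n
    rw [Polynomial.coeff_C_mul, key n, Polynomial.coeff_zero]
  have hfin := congrArg (pit p (p ^ N)) hCP
  rw [map_mul, pit_C, pit_slicePoly, map_zero, iota_epsB, sub_mul, one_mul] at hfin
  exact sub_eq_zero.mp hfin

end Core

/-! ### Glue: the evolution operator -/

section Glue

variable {p : ℕ} [Fact p.Prime]

lemma mul_pow_fix {S : Type*} [CommMonoid S] (x w : S) (h : x * w = w) (m : ℕ) :
    x ^ m * w = w := by
  induction m with
  | zero => rw [pow_zero, one_mul]
  | succ m ih => rw [pow_succ, mul_comm (x ^ m) x, mul_assoc, ih, h]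

lemma vv_pow_L (N : ℕ) : vv p (p ^ N) ^ (p ^ N) = 1 := by
  haveI : NeZero (p ^ N) := ⟨pow_ne_zero _ (Fact.out : p.Prime).ne_zero⟩
  rw [vv_pow, ZMod.natCast_self]
  exact (AddMonoidAlgebra.one_def).symm

lemma isUnit_aeval_vv (N : ℕ) {f : (ZMod p)[X]} (hf1 : f.eval 1 ≠ 0) :
    IsUnit (aeval (vv p (p ^ N)) f) := by
  haveI : NeZero (p ^ N) := ⟨pow_ne_zero _ (Fact.out : p.Prime).ne_zero⟩
  refine isUnit_of_pow_isUnit ?_ (pow_ne_zero N (Fact.out : p.Prime).ne_zero)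
  rw [aeval_pow_char_pow, vv_pow_L,
    show (1 : R p (p ^ N)) = algebraMap (ZMod p) (R p (p ^ N)) 1 from (map_one _).symm,
    Polynomial.aeval_algebraMap_apply_eq_algebraMap_eval]
  exact (isUnit_iff_ne_zero.mpr hf1).map _

lemma th_iter (N : ℕ) (f : (ZMod p)[X]) (hf1 : f.eval 1 ≠ 0) (W : R p (p ^ N)) (n : ℕ) :
    aeval (vv p (p ^ N)) f ^ n * (th f)^[n] W
      = aeval (uu p (p ^ N) * vv p (p ^ N)) f ^ n * W := by
  induction n with
  | zero => simp
  | succ n ih =>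
    rw [Function.iterate_succ_apply', th]
    have h1 : aeval (vv p (p ^ N)) f ^ (n + 1)
        * (Ring.inverse (aeval (vv p (p ^ N)) f) * aeval (uu p (p ^ N) * vv p (p ^ N)) f
          * (th f)^[n] W)
        = (aeval (vv p (p ^ N)) f * Ring.inverse (aeval (vv p (p ^ N)) f))
          * (aeval (uu p (p ^ N) * vv p (p ^ N)) f
            * (aeval (vv p (p ^ N)) f ^ n * (th f)^[n] W)) := by ring
    rw [h1, Ring.mul_inverse_cancel _ (isUnit_aeval_vv N hf1), one_mul, ih, pow_succ]
    ring

end Glue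

end S14


open S14

/-- for squarefree `f` with `f(0) ≠ 0`, `f(1) ≠ 0` and `deg f = δ ≥ 1`,
for all sufficiently large `L = p^N`, every consistently `ℓ`-local `W` under `t_f`
satisfies `u^{p^k} · W = W` whenever `p^k > ℓ/δ` (i.e. `ℓ < δ·p^k`). -/
theorem statement14 (p : ℕ) (hp : p.Prime) (f : (ZMod p)[X]) (hsf : Squarefree f)
    (hf0 : f.eval 0 ≠ 0) (hf1 : f.eval 1 ≠ 0) (δ : ℕ) (hδ : f.natDegree = δ)
    (hδ1 : 1 ≤ δ) :
    ∀ ℓ : ℕ, ∃ N₀ : ℕ, ∀ N ≥ N₀,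
      ∀ W : R p (p ^ N), ConsLocal f ℓ W →
        ∀ k : ℕ, ℓ < δ * p ^ k → uu p (p ^ N) ^ p ^ k * W = W := by
  haveI : Fact p.Prime := ⟨hp⟩
  intro ℓ
  refine ⟨(p + 1) * ℓ + δ + p + 2, fun N hN W hW => ?_⟩
  haveI : NeZero (p ^ N) := ⟨pow_ne_zero _ hp.ne_zero⟩
  have h2 : N < 2 ^ N := Nat.lt_two_pow_self
  have h3 : 2 ^ N ≤ p ^ N := Nat.pow_le_pow_left hp.two_le N
  have hLbig : (p + 1) * ℓ + (δ + 1) < p ^ N := by omega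
  have step : ∀ k : ℕ, ℓ < δ * p ^ k → δ * p ^ k + ℓ < p ^ N →
      uu p (p ^ N) ^ p ^ k * W = W := by
    intro k hk1 hk2
    have hd1 : 1 ≤ f.natDegree := hδ ▸ hδ1
    have hIter := th_iter N f hf1 W (p ^ k)
    rw [aeval_pow_char_pow, aeval_pow_char_pow] at hIter
    exact core hsf hf0 hd1 N k ℓ (by rw [hδ]; exact hk2) (by rw [hδ]; exact hk1) W
      ((th f)^[p ^ k] W) hIter.symm (by simpa using hW 0) (hW (p ^ k))
  intro k hk
  induction k with
  | zero =>
    apply step 0 hk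
    have hl1 : ℓ ≤ (p + 1) * ℓ := Nat.le_mul_of_pos_left ℓ (by omega)
    have he : δ * p ^ 0 = δ := by rw [pow_zero, mul_one]
    omega
  | succ k ih =>
    by_cases hc : ℓ < δ * p ^ k
    · have hprev := ih hc
      rw [show (p : ℕ) ^ (k + 1) = p ^ k * p from pow_succ p k, pow_mul]
      exact mul_pow_fix _ _ hprev p
    · push_neg at hc
      apply step (k + 1) hk
      have h1 : δ * p ^ (k + 1) ≤ p * ℓ := by
        calc δ * p ^ (k + 1) = (δ * p ^ k) * p := by rw [pow_succ]; ring
          _ ≤ ℓ * p := Nat.mul_le_mul_right _ hc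
          _ = p * ℓ := mul_comm _ _
      have h4 : p * ℓ + ℓ = (p + 1) * ℓ := by ring
      omega

end
end

section
/- Let p be a prime, P = p^s with s ≥ 1, and let h = Σ_k h_k x^k ∈ 𝔽_p[x] be irreducible with h(0) ≠ 0 and deg h ≥ 1. Define g(x) = Σ_k c_k·h_k·x^k ∈ 𝔽_p[x], where c_k ∈ 𝔽_p is the image of the integer (k mod P) ∈ {0, …, P−1} in 𝔽_p. Then g ≠ 0 and h does not divide g in 𝔽_p[x]. -/
open Polynomial

lemma sum_eq_X_mul_deriv {p : ℕ} [Fact p.Prime] (h : (ZMod p)[X]) :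
    (∑ k ∈ Finset.range (h.natDegree + 1), C ((k : ZMod p) * h.coeff k) * X ^ k) =
      X * derivative h := by
  ext m
  rw [finset_sum_coeff]
  simp only [coeff_C_mul_X_pow]
  rw [Finset.sum_ite_eq (Finset.range (h.natDegree + 1)) m]
  have hrhs : (X * derivative h).coeff m = (m : ZMod p) * h.coeff m := by
    cases m with
    | zero => simp
    | succ j =>
      rw [coeff_X_mul, coeff_derivative]
      push_cast
      ring
  rw [hrhs]
  split_ifs with hm
  · rfl
  · rw [Finset.mem_range, not_lt] at hm
    rw [coeff_eq_zero_of_natDegree_lt (by omega), mul_zero]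

/-- for `P = p^s` (`s ≥ 1`) and `h = Σ h_k x^k` irreducible over `𝔽_p` with
`h(0) ≠ 0` and `deg h ≥ 1`, the polynomial `g = Σ_k (k mod P)·h_k·x^k` is nonzero and is
not divisible by `h`. -/
theorem statement15 (p : ℕ) (hp : p.Prime) (s : ℕ) (hs : 1 ≤ s)
    (h : (ZMod p)[X]) (hirr : Irreducible h) (h0 : h.eval 0 ≠ 0)
    (hd : 1 ≤ h.natDegree) :
    (∑ k ∈ Finset.range (h.natDegree + 1),
        C (((k % p ^ s : ℕ) : ZMod p) * h.coeff k) * X ^ k) ≠ 0 ∧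
      ¬ h ∣ ∑ k ∈ Finset.range (h.natDegree + 1),
          C (((k % p ^ s : ℕ) : ZMod p) * h.coeff k) * X ^ k := by
  haveI : Fact p.Prime := ⟨hp⟩
  have hcast : ∀ k : ℕ, ((k % p ^ s : ℕ) : ZMod p) = (k : ZMod p) := by
    intro k
    conv_rhs => rw [← ZMod.natCast_mod k p]
    rw [← Nat.mod_mod_of_dvd k (dvd_pow_self p (Nat.one_le_iff_ne_zero.mp hs)), ZMod.natCast_mod]
  have hsum : (∑ k ∈ Finset.range (h.natDegree + 1),
      C (((k % p ^ s : ℕ) : ZMod p) * h.coeff k) * X ^ k) = X * derivative h := by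
    rw [← sum_eq_X_mul_deriv h]
    exact Finset.sum_congr rfl fun k _ => by rw [hcast k]
  rw [hsum]
  have hsep : h.Separable := PerfectField.separable_of_irreducible hirr
  have hderiv : derivative h ≠ 0 := by
    intro hz
    rw [Separable, hz, isCoprime_zero_right] at hsep
    exact hirr.not_isUnit hsep
  constructor
  · exact mul_ne_zero X_ne_zero hderiv
  · intro hdvd
    have hX : h ∣ X := hsep.dvd_of_dvd_mul_right hdvd
    obtain ⟨q, hq⟩ := hX
    have hq0 : q ≠ 0 := by rintro rfl; rw [mul_zero] at hq; exact X_ne_zero hq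
    have hh0 : h ≠ 0 := hirr.ne_zero
    have hdeg : (1 : ℕ) = h.natDegree + q.natDegree := by
      have := natDegree_mul hh0 hq0
      rw [← hq, natDegree_X] at this
      exact this
    have hqdeg : q.natDegree = 0 := by omega
    have hqe : q.eval 0 = 0 := by
      have := congrArg (eval 0) hq
      simp only [eval_X, eval_mul] at this
      rcases mul_eq_zero.mp this.symm with hc | hc
      · exact absurd hc h0
      · exact hc
    have hqc : q = C (q.coeff 0) := eq_C_of_natDegree_eq_zero hqdeg
    rw [hqc, eval_C] at hqe
    exact X_ne_zero (by rw [hq, hqc, hqe, map_zero, mul_zero])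
end

section
/- Let G be an abelian group and let ω : G × G → ℂˣ be a factor system (2-cocycle with ω(1,g) = ω(g,1) = 1). Define Ω(g₁,g₂) = ω(g₁,g₂)·ω(g₂,g₁)^{−1}. If a, b ∈ G have finite orders n₁ and n₂ respectively, then Ω(a,b)^{n₁} = 1 and Ω(a,b)^{n₂} = 1; consequently Ω(a,b)^{gcd(n₁,n₂)} = 1, i.e. Ω(a,b) is a gcd(n₁,n₂)-th root of unity. -/
/-- The commutator phase `Ω(g₁,g₂) = ω(g₁,g₂)·ω(g₂,g₁)⁻¹` of a factor system. -/
def OmegaPhase {G : Type*} [CommGroup G] (ω : G → G → ℂˣ) (g₁ g₂ : G) : ℂˣ :=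
  ω g₁ g₂ * (ω g₂ g₁)⁻¹

/-- A factor system (2-cocycle) on `G` with values in `ℂˣ`. -/
def IsFactorSystem {G : Type*} [CommGroup G] (ω : G → G → ℂˣ) : Prop :=
  (∀ g₁ g₂ g₃ : G, ω g₁ g₂ * ω (g₁ * g₂) g₃ = ω g₁ (g₂ * g₃) * ω g₂ g₃) ∧
    (∀ g : G, ω 1 g = 1 ∧ ω g 1 = 1)

/-- On an abelian group, the commutator phase is multiplicative in the first argument. -/
lemma omegaPhase_mul_left {G : Type*} [CommGroup G] (ω : G → G → ℂˣ)
    (hω : IsFactorSystem ω) (x y z : G) :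
    OmegaPhase ω (x * y) z = OmegaPhase ω x z * OmegaPhase ω y z := by
  obtain ⟨hc, -⟩ := hω
  have h1 := hc x y z
  have h2 := hc x z y
  rw [mul_comm x z, mul_comm z y] at h2
  have h3 := hc z x y
  have e1 : (ω x y : ℂ) * ω (x * y) z = ω x (y * z) * ω y z :=
    mod_cast congrArg Units.val h1
  have e2 : (ω x z : ℂ) * ω (z * x) y = ω x (y * z) * ω z y :=
    mod_cast congrArg Units.val h2
  have e3 : (ω z x : ℂ) * ω (z * x) y = ω z (x * y) * ω x y :=
    mod_cast congrArg Units.val h3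
  have key : ω (x * y) z * ω z x * ω z y = ω x z * ω y z * ω z (x * y) := by
    apply Units.ext
    push_cast
    apply mul_left_cancel₀ (mul_ne_zero (Units.ne_zero (ω x y)) (Units.ne_zero (ω (z*x) y)))
    linear_combination ((ω (z*x) y : ℂ) * ω z x * ω z y) * e1
      + ((ω x z : ℂ) * ω y z * ω (z*x) y) * e3
      - ((ω (z*x) y : ℂ) * ω z x * ω y z) * e2
  unfold OmegaPhase
  have : ω (x * y) z = ω x z * ω y z * ω z (x * y) * (ω z x)⁻¹ * (ω z y)⁻¹ := by
    rw [eq_mul_inv_iff_mul_eq, eq_mul_inv_iff_mul_eq, mul_right_comm]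
    exact key
  rw [this]
  simp [mul_comm, mul_assoc, mul_left_comm]
  rw [mul_comm ((ω z y)⁻¹) ((ω z (x*y))⁻¹), mul_left_comm ((ω z x)⁻¹), mul_inv_cancel_left]

lemma omegaPhase_one_left {G : Type*} [CommGroup G] (ω : G → G → ℂˣ)
    (hω : IsFactorSystem ω) (z : G) : OmegaPhase ω 1 z = 1 := by
  unfold OmegaPhase
  rw [(hω.2 z).1, (hω.2 z).2]
  simp

lemma omegaPhase_pow_left {G : Type*} [CommGroup G] (ω : G → G → ℂˣ)
    (hω : IsFactorSystem ω) (x z : G) (n : ℕ) :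
    OmegaPhase ω (x ^ n) z = OmegaPhase ω x z ^ n := by
  induction n with
  | zero => simpa using omegaPhase_one_left ω hω z
  | succ k ih => rw [pow_succ, pow_succ, omegaPhase_mul_left ω hω, ih]

lemma omegaPhase_swap {G : Type*} [CommGroup G] (ω : G → G → ℂˣ) (x z : G) :
    OmegaPhase ω x z = (OmegaPhase ω z x)⁻¹ := by
  unfold OmegaPhase
  rw [mul_inv, inv_inv, mul_comm]

/-- if `a, b ∈ G` have finite orders `n₁, n₂`, then
`Ω(a,b)^{n₁} = Ω(a,b)^{n₂} = 1`, and consequently `Ω(a,b)^{gcd(n₁,n₂)} = 1`. -/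
theorem statement17 {G : Type*} [CommGroup G] (ω : G → G → ℂˣ)
    (hω : IsFactorSystem ω) (a b : G) (n₁ n₂ : ℕ) (hn₁ : 0 < n₁) (hn₂ : 0 < n₂)
    (ha : orderOf a = n₁) (hb : orderOf b = n₂) :
    OmegaPhase ω a b ^ n₁ = 1 ∧ OmegaPhase ω a b ^ n₂ = 1 ∧
      OmegaPhase ω a b ^ Nat.gcd n₁ n₂ = 1 := by
  have h1 : OmegaPhase ω a b ^ n₁ = 1 := by
    rw [← omegaPhase_pow_left ω hω, ← ha, pow_orderOf_eq_one,
      omegaPhase_one_left ω hω]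
  have h2 : OmegaPhase ω a b ^ n₂ = 1 := by
    rw [omegaPhase_swap, inv_pow, ← omegaPhase_pow_left ω hω, ← hb,
      pow_orderOf_eq_one, omegaPhase_one_left ω hω, inv_one]
  refine ⟨h1, h2, ?_⟩
  have hd : orderOf (OmegaPhase ω a b) ∣ Nat.gcd n₁ n₂ :=
    Nat.dvd_gcd (orderOf_dvd_of_pow_eq_one h1) (orderOf_dvd_of_pow_eq_one h2)
  exact orderOf_dvd_iff_pow_eq_one.mp hd
end
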